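/- arXiv:2408.11236 — 15 statements merged into one kernel-verified Lean document; each statement's English description precedes it below -/
import Mathlib

section
/- Let (𝔥,[·,·]) be a real Lie algebra with an almost Kähler structure (g,J,ω), let 𝔥_ω = 𝔥 ⊕ ℝξ be the central extension of 𝔥 by the 2-cocycle ω (ξ the added central element), let α := ξ* ∈ 𝔥_ω* be the linear form with α(ξ)=1 and α=0 on 𝔥, and let Φ ∈ End(𝔥_ω) be defined by Φ(x)=J(x) for x ∈ 𝔥 and Φ(ξ)=0. Then for all X = x + λξ and Y = y + μξ with x,y ∈ 𝔥 and λ,μ ∈ ℝ, the Nijenhuis tensor of Φ on 𝔥_ω satisfies N_Φ(X,Y) = N_J(x,y) − dα(X,Y)·ξ, where dα(X,Y) = −α([X,Y]_ω). -/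
/-- The Nijenhuis tensor of a linear endomorphism `F` of a real Lie algebra:
`N_F(x,y) = F²([x,y]) + [Fx,Fy] − F([x,Fy]) − F([Fx,y])`. -/
def nijenhuis {L : Type*} [LieRing L] [LieAlgebra ℝ L] (F : L →ₗ[ℝ] L) (x y : L) : L :=
  F (F ⁅x, y⁆) + ⁅F x, F y⁆ - F ⁅x, F y⁆ - F ⁅F x, y⁆

/-- Let `(g,J,ω)` be an almost Kähler structure on a real Lie algebra `H`, let `E = H ⊕ ℝξ`
be the central extension of `H` by the 2-cocycle `ω`, let `α = ξ*`, and let `Φ` extend `J`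
by `Φ(ξ) = 0`.  Then `N_Φ(X,Y) = N_J(x,y) − dα(X,Y)·ξ` for `X = x + lξ`, `Y = y + mξ`,
where `dα(X,Y) = −α([X,Y])`. -/
theorem nijenhuis_central_extension_almost_kahler
    {H E : Type*} [LieRing H] [LieAlgebra ℝ H] [LieRing E] [LieAlgebra ℝ E]
    -- the almost Kähler structure (g, J, ω) on H
    (g : H →ₗ[ℝ] H →ₗ[ℝ] ℝ) (J : H →ₗ[ℝ] H) (ω : H →ₗ[ℝ] H →ₗ[ℝ] ℝ)
    (hg_symm : ∀ x y : H, g x y = g y x)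
    (hg_pos : ∀ x : H, x ≠ 0 → 0 < g x x)
    (hJ2 : ∀ x : H, J (J x) = -x)
    (hgJ : ∀ x y : H, g (J x) y + g x (J y) = 0)
    (hω : ∀ x y : H, ω x y = g x (J y))
    (hclosed : ∀ x y w : H, ω ⁅x, y⁆ w + ω ⁅y, w⁆ x + ω ⁅w, x⁆ y = 0)
    -- E is the central extension of H by the 2-cocycle ω, with added central element ξ
    (i : H →ₗ[ℝ] E) (ξ : E)
    (hdecomp : ∀ v : E, ∃! p : H × ℝ, v = i p.1 + p.2 • ξ)
    (hbracket : ∀ (x y : H) (l m : ℝ),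
      ⁅i x + l • ξ, i y + m • ξ⁆ = i ⁅x, y⁆ + ω x y • ξ)
    -- α = ξ* : the linear form with α(ξ) = 1 and α = 0 on H
    (α : E →ₗ[ℝ] ℝ) (hαξ : α ξ = 1) (hαH : ∀ x : H, α (i x) = 0)
    -- Φ extends J with Φ(ξ) = 0
    (Φ : E →ₗ[ℝ] E) (hΦH : ∀ x : H, Φ (i x) = i (J x)) (hΦξ : Φ ξ = 0) :
    ∀ (x y : H) (l m : ℝ),
      nijenhuis Φ (i x + l • ξ) (i y + m • ξ)
        = i (nijenhuis J x y) - (-(α ⁅i x + l • ξ, i y + m • ξ⁆)) • ξ := by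
  intro x y l m
  have hbr : ∀ u v : H, ⁅i u, i v⁆ = i ⁅u, v⁆ + ω u v • ξ := by
    intro u v
    have := hbracket u v 0 0
    simpa using this
  have hΦ' : ∀ (u : H) (c : ℝ), Φ (i u + c • ξ) = i (J u) := by
    intro u c
    simp [map_add, map_smul, hΦH, hΦξ]
  have hα' : ∀ (u : H) (c : ℝ), α (i u + c • ξ) = c := by
    intro u c
    simp [map_add, map_smul, hαH, hαξ]
  have hωJ : ω (J x) (J y) = ω x y := by
    rw [hω, hω, hJ2, map_neg]
    linarith [hgJ x y]
  have hb1 : ⁅i x + l • ξ, i (J y)⁆ = i ⁅x, J y⁆ + ω x (J y) • ξ := by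
    have := hbracket x (J y) l 0
    simpa using this
  have hb2 : ⁅i (J x), i y + m • ξ⁆ = i ⁅J x, y⁆ + ω (J x) y • ξ := by
    have := hbracket (J x) y 0 m
    simpa using this
  simp only [nijenhuis, hbracket x y l m, hΦ', hb1, hb2, hbr, map_add, map_smul, map_sub,
    hΦξ, hΦH, hαH, hαξ, smul_zero, add_zero, hωJ, smul_eq_mul, mul_one, neg_neg, zero_add]
  module
end

section
/- Let (g,J,ω) be a Kähler structure on a real Lie algebra (𝔥,[·,·]) and let 𝔥_ω = 𝔥 ⊕ ℝξ be the central extension of 𝔥 by the 2-cocycle ω. Define α := ξ* ∈ 𝔥_ω* (α(ξ)=1, α=0 on 𝔥), ḡ := g + α⊗α (i.e. ḡ(x+λξ, y+μξ) = g(x,y) + λμ), and Φ ∈ End(𝔥_ω) by Φ(x) = −J(x) for x ∈ 𝔥 and Φ(ξ) = 0. Then (ḡ, ξ, α, Φ) is a Sasakian structure on 𝔥_ω; that is, the central extension of a Kähler Lie algebra by the 2-cocycle given by its symplectic form is a Sasakian Lie algebra. -/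
/-- The central extension of a Kähler Lie algebra `(H, g, J, ω)` by the 2-cocycle given by
its symplectic form `ω` is a Sasakian Lie algebra: with `α = ξ*`, `ḡ = g + α⊗α`, and
`Φ = −J` on `H`, `Φ(ξ) = 0`, the tuple `(ḡ, ξ, α, Φ)` is a Sasakian structure on the
central extension. -/
theorem central_extension_kahler_is_sasakian
    {H E : Type*} [LieRing H] [LieAlgebra ℝ H] [LieRing E] [LieAlgebra ℝ E]
    -- the Kähler structure (g, J, ω) on H
    (g : H →ₗ[ℝ] H →ₗ[ℝ] ℝ) (J : H →ₗ[ℝ] H) (ω : H →ₗ[ℝ] H →ₗ[ℝ] ℝ)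
    (hg_symm : ∀ x y : H, g x y = g y x)
    (hg_pos : ∀ x : H, x ≠ 0 → 0 < g x x)
    (hJ2 : ∀ x : H, J (J x) = -x)
    (hgJ : ∀ x y : H, g (J x) y + g x (J y) = 0)
    (hNJ : ∀ x y : H, nijenhuis J x y = 0)
    (hω : ∀ x y : H, ω x y = g x (J y))
    (hclosed : ∀ x y w : H, ω ⁅x, y⁆ w + ω ⁅y, w⁆ x + ω ⁅w, x⁆ y = 0)
    -- E is the central extension of H by the 2-cocycle ω, with added central element ξ
    (i : H →ₗ[ℝ] E) (ξ : E)
    (hdecomp : ∀ v : E, ∃! p : H × ℝ, v = i p.1 + p.2 • ξ)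
    (hbracket : ∀ (x y : H) (l m : ℝ),
      ⁅i x + l • ξ, i y + m • ξ⁆ = i ⁅x, y⁆ + ω x y • ξ)
    -- α = ξ*
    (α : E →ₗ[ℝ] ℝ) (hαξ : α ξ = 1) (hαH : ∀ x : H, α (i x) = 0)
    -- ḡ = g + α⊗α
    (gE : E →ₗ[ℝ] E →ₗ[ℝ] ℝ)
    (hgE : ∀ (x y : H) (l m : ℝ), gE (i x + l • ξ) (i y + m • ξ) = g x y + l * m)
    -- Φ = −J on H, Φ(ξ) = 0
    (Φ : E →ₗ[ℝ] E) (hΦH : ∀ x : H, Φ (i x) = -(i (J x))) (hΦξ : Φ ξ = 0) :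
    -- (ḡ, ξ, α, Φ) is a Sasakian structure on E:
    (∀ u v : E, gE u v = gE v u) ∧
    (∀ u : E, u ≠ 0 → 0 < gE u u) ∧
    α ξ = 1 ∧
    (∀ u : E, Φ (Φ u) = -u + α u • ξ) ∧
    (∀ u v : E, gE (Φ u) (Φ v) = gE u v - α u * α v) ∧
    (∀ u v : E, gE u (Φ v) = -(α ⁅u, v⁆)) ∧
    (∀ u v : E, nijenhuis Φ u v = α ⁅u, v⁆ • ξ) := by
  -- helper lemmas
  have hαform : ∀ (a : H) (t : ℝ), α (i a + t • ξ) = t := by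
    intro a t; simp [map_add, map_smul, hαH, hαξ]
  have hΦform : ∀ (a : H) (t : ℝ), Φ (i a + t • ξ) = -(i (J a)) := by
    intro a t; simp [map_add, map_smul, hΦH, hΦξ]
  have hbr : ∀ a b : H, ⁅(i a : E), i b⁆ = i ⁅a, b⁆ + ω a b • ξ := by
    intro a b; have := hbracket a b 0 0; simpa using this
  have hbr3 : ∀ (a b : H) (t : ℝ), ⁅i a + t • ξ, (i b : E)⁆ = i ⁅a, b⁆ + ω a b • ξ := by
    intro a b t; have := hbracket a b t 0; simpa using this
  have hbr4 : ∀ (a b : H) (t : ℝ), ⁅(i a : E), i b + t • ξ⁆ = i ⁅a, b⁆ + ω a b • ξ := by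
    intro a b t; have := hbracket a b 0 t; simpa using this
  have hgJJ : ∀ a b : H, g (J a) (J b) = g a b := by
    intro a b
    have h1 := hgJ a (J b)
    have h2 : g a (J (J b)) = -(g a b) := by rw [hJ2]; simp
    linarith [hgJ a b, hgJ a (J b), h2]
  have hωJJ : ∀ a b : H, ω (J a) (J b) = ω a b := by
    intro a b
    rw [hω, hω, hJ2, map_neg]
    linarith [hgJ a b]
  have hdec : ∀ v : E, ∃ p : H × ℝ, v = i p.1 + p.2 • ξ := fun v => (hdecomp v).exists
  refine ⟨?_, ?_, hαξ, ?_, ?_, ?_, ?_⟩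
  · -- symmetry
    intro u v
    obtain ⟨⟨x, l⟩, hu⟩ := hdec u
    obtain ⟨⟨y, m⟩, hv⟩ := hdec v
    rw [hu, hv, hgE, hgE, hg_symm]
    ring
  · -- positivity
    intro u hu0
    obtain ⟨⟨x, l⟩, hu⟩ := hdec u
    rw [hu, hgE]
    by_cases hx : x = 0
    · have hl : l ≠ 0 := by
        intro h; apply hu0; rw [hu, hx, h]; simp
      have : 0 < l * l := mul_self_pos.mpr hl
      subst hx
      simp only [map_zero, LinearMap.zero_apply]
      linarith
    · have h1 := hg_pos x hx
      nlinarith [mul_self_nonneg l]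
  · -- Φ² = -Id + α ⊗ ξ
    intro u
    obtain ⟨⟨x, l⟩, hu⟩ := hdec u
    rw [hu, hΦform, hαform, map_neg, hΦH, neg_neg, hJ2, map_neg]
    abel
  · -- gE(Φu, Φv) = gE(u,v) - α(u)α(v)
    intro u v
    obtain ⟨⟨x, l⟩, hu⟩ := hdec u
    obtain ⟨⟨y, m⟩, hv⟩ := hdec v
    have h1 : Φ u = i (-(J x)) + (0:ℝ) • ξ := by rw [hu, hΦform]; simp
    have h2 : Φ v = i (-(J y)) + (0:ℝ) • ξ := by rw [hv, hΦform]; simp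
    rw [h1, h2, hgE, hu, hv, hgE, hαform, hαform]
    simp [hgJJ]
  · -- gE(u, Φv) = -α⁅u,v⁆
    intro u v
    obtain ⟨⟨x, l⟩, hu⟩ := hdec u
    obtain ⟨⟨y, m⟩, hv⟩ := hdec v
    have h2 : Φ v = i (-(J y)) + (0:ℝ) • ξ := by rw [hv, hΦform]; simp
    rw [hu, h2, hgE, hv, hbracket, map_add, map_smul, hαH, hαξ, hω]
    simp
  · -- Nijenhuis
    intro u v
    obtain ⟨⟨x, l⟩, hu⟩ := hdec u
    obtain ⟨⟨y, m⟩, hv⟩ := hdec v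
    have key : i ⁅J x, J y⁆ - i (J ⁅x, J y⁆) - i (J ⁅J x, y⁆) = i ⁅x, y⁆ := by
      have h := hNJ x y
      simp only [nijenhuis, hJ2] at h
      have h' : ⁅J x, J y⁆ - J ⁅x, J y⁆ - J ⁅J x, y⁆ = ⁅x, y⁆ := by
        have : -⁅x, y⁆ + ⁅J x, J y⁆ - J ⁅x, J y⁆ - J ⁅J x, y⁆ = 0 := h
        abel_nf at this ⊢
        linear_combination (norm := abel) this
      rw [← map_sub, ← map_sub, h']
    rw [hu, hv]
    simp only [nijenhuis, hbracket, hbr, hbr3, hbr4, map_add, map_smul, map_neg,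
      hΦform, hΦH, hΦξ, smul_zero, add_zero, neg_neg, lie_neg, neg_lie, hJ2,
      hαH, hαξ, hωJJ]
    rw [show (i ⁅x,y⁆ : E) = i ⁅J x, J y⁆ - i (J ⁅x, J y⁆) - i (J ⁅J x, y⁆) from key.symm]
    simp only [smul_eq_mul, zero_add, mul_one]
    abel
end

section
/- Let (g, ξ, α, Φ) be a Sasakian structure on a real Lie algebra (𝔤,[·,·]) whose center is the one-dimensional subspace spanned by ξ. Let 𝔥 := Ker(α), equipped with the Lie bracket [x,y]_𝔥 := [x,y] − α([x,y])ξ (the 𝔥-component of the bracket of 𝔤). Let J := Φ|_𝔥, let ω(x,y) := dα(x,y) = −α([x,y]) for x,y ∈ 𝔥, and let g_𝔥 := g|_{𝔥×𝔥}. Then (g_𝔥, J, ω) is a Kähler structure on the Lie algebra (𝔥, [·,·]_𝔥). -/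
/-- If `(g, ξ, α, Φ)` is a Sasakian structure on a real Lie algebra `G` whose center is the
one-dimensional subspace spanned by `ξ`, then `𝔥 = Ker α`, with the `𝔥`-component
`[x,y]_𝔥 = [x,y] − α([x,y])ξ` of the bracket, `J = Φ|_𝔥`, `ω = dα|_𝔥`, and `g|_𝔥`,
is a Kähler Lie algebra.  (The algebra `𝔥` is modelled by a Lie algebra `K` with an
injective linear map `i : K → G` whose range is `Ker α`.) -/
theorem sasakian_center_gives_kahler_kernel
    {G K : Type*} [LieRing G] [LieAlgebra ℝ G] [LieRing K] [LieAlgebra ℝ K]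
    -- the Sasakian structure (g, ξ, α, Φ) on G
    (g : G →ₗ[ℝ] G →ₗ[ℝ] ℝ) (ξ : G) (α : G →ₗ[ℝ] ℝ) (Φ : G →ₗ[ℝ] G)
    (hg_symm : ∀ x y : G, g x y = g y x)
    (hg_pos : ∀ x : G, x ≠ 0 → 0 < g x x)
    (hαξ : α ξ = 1)
    (hΦ2 : ∀ x : G, Φ (Φ x) = -x + α x • ξ)
    (hΦg : ∀ x y : G, g (Φ x) (Φ y) = g x y - α x * α y)
    (hgdα : ∀ x y : G, g x (Φ y) = -(α ⁅x, y⁆))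
    (hNΦ : ∀ x y : G, nijenhuis Φ x y = α ⁅x, y⁆ • ξ)
    -- the center of G is the one-dimensional subspace spanned by ξ
    (hcenter : ∀ v : G, (∀ x : G, ⁅v, x⁆ = 0) ↔ ∃ c : ℝ, v = c • ξ)
    -- K models Ker(α) with the 𝔥-component bracket
    (i : K →ₗ[ℝ] G) (hinj : Function.Injective i)
    (hker : ∀ x : K, α (i x) = 0)
    (hsurj : ∀ v : G, α v = 0 → ∃ x : K, i x = v)
    (hbr : ∀ x y : K, i ⁅x, y⁆ = ⁅i x, i y⁆ - α ⁅i x, i y⁆ • ξ)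
    -- J = Φ|_𝔥, g_𝔥 = g|_{𝔥×𝔥}, ω = dα|_𝔥
    (J : K →ₗ[ℝ] K) (hJ : ∀ x : K, i (J x) = Φ (i x))
    (gK : K →ₗ[ℝ] K →ₗ[ℝ] ℝ) (hgK : ∀ x y : K, gK x y = g (i x) (i y))
    (ω : K →ₗ[ℝ] K →ₗ[ℝ] ℝ) (hω : ∀ x y : K, ω x y = -(α ⁅i x, i y⁆)) :
    -- (g_𝔥, J, ω) is a Kähler structure on K:
    (∀ x y : K, gK x y = gK y x) ∧
    (∀ x : K, x ≠ 0 → 0 < gK x x) ∧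
    (∀ x : K, J (J x) = -x) ∧
    (∀ x y : K, gK (J x) y + gK x (J y) = 0) ∧
    (∀ x y : K, nijenhuis J x y = 0) ∧
    (∀ x y : K, ω x y = gK x (J y)) ∧
    (∀ x y w : K, ω ⁅x, y⁆ w + ω ⁅y, w⁆ x + ω ⁅w, x⁆ y = 0) := by
  -- ξ is central
  have hξcen : ∀ x : G, ⁅ξ, x⁆ = 0 := by
    intro x
    exact (hcenter ξ).2 ⟨1, (one_smul ℝ ξ).symm⟩ x
  have hcenξ : ∀ x : G, ⁅x, ξ⁆ = 0 := by
    intro x; rw [← lie_skew, hξcen]; simp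
  -- Φ ξ = 0
  have hΦξ : Φ ξ = 0 := by
    by_contra h
    have h1 : g (Φ ξ) (Φ ξ) = -(α ⁅Φ ξ, ξ⁆) := hgdα (Φ ξ) ξ
    rw [hcenξ] at h1
    simp at h1
    exact absurd h1 (ne_of_gt (hg_pos _ h))
  -- g x ξ = α x
  have hgξ : ∀ x : G, g x ξ = α x := by
    intro x
    have := hΦg x ξ
    rw [hΦξ, hαξ] at this
    simp at this
    linarith
  -- α ∘ Φ = 0
  have hαΦ : ∀ x : G, α (Φ x) = 0 := by
    intro x
    rw [← hgξ, hg_symm, hgdα, hξcen]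
    simp
  -- α ⁅Φ x, Φ y⁆ = α ⁅x, y⁆
  have hkey : ∀ x y : G, α ⁅Φ x, Φ y⁆ = α ⁅x, y⁆ := by
    intro x y
    have h := congrArg α (hNΦ x y)
    unfold nijenhuis at h
    rw [hΦ2] at h
    simp only [map_add, map_sub, map_smul, map_neg, hαΦ, hαξ, smul_eq_mul] at h
    linarith
  refine ⟨?_, ?_, ?_, ?_, ?_, ?_, ?_⟩
  · intro x y; rw [hgK, hgK, hg_symm]
  · intro x hx
    rw [hgK]
    exact hg_pos _ (fun h => hx (hinj (by rw [h, map_zero])))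
  · intro x
    apply hinj
    rw [hJ, hJ, hΦ2, hker, map_neg]
    simp
  · intro x y
    rw [hgK, hgK, hJ, hJ, hgdα, hg_symm, hgdα, ← lie_skew, map_neg]
    ring
  · intro x y
    apply hinj
    rw [map_zero]
    unfold nijenhuis
    rw [map_sub, map_sub, map_add, hJ, hJ, hJ, hJ, hbr, hbr, hbr, hbr,
      map_sub, map_smul, hΦξ, hJ, hJ]
    have h := hNΦ (i x) (i y)
    unfold nijenhuis at h
    rw [hkey]
    simp only [smul_zero, sub_zero, map_sub, map_smul, hΦξ]
    linear_combination (norm := module) h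
  · intro x y
    rw [hω, hgK, hJ, hgdα]
  · intro x y w
    rw [hω, hω, hω, hbr, hbr, hbr]
    rw [sub_lie, sub_lie, sub_lie, smul_lie, smul_lie, smul_lie,
      hξcen, hξcen, hξcen]
    have hj : ⁅⁅i x, i y⁆, i w⁆ + ⁅⁅i y, i w⁆, i x⁆ + ⁅⁅i w, i x⁆, i y⁆ = 0 := by
      rw [← lie_skew ⁅i x, i y⁆ (i w), ← lie_skew ⁅i y, i w⁆ (i x),
        ← lie_skew ⁅i w, i x⁆ (i y)]
      linear_combination (norm := module) -lie_jacobi (i x) (i y) (i w)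
    have := congrArg α hj
    simp only [map_add, map_zero, smul_zero, sub_zero] at this ⊢
    linarith
end

section
/- Let (𝔥,[·,·]) be a real Lie algebra with a 2-cocycle ω that is nondegenerate (a symplectic form), and let J ∈ End(𝔥) be a complex structure (J² = −Id and N_J = 0) compatible with ω in the sense that ω(Jx,Jy) = ω(x,y) for all x,y ∈ 𝔥. Let 𝔥_ω = 𝔥 ⊕ ℝξ be the central extension of 𝔥 by ω, let D ∈ Der(𝔥_ω) with D(ξ) = 0, and let 𝔤 = 𝔥(D,ω) = ℝD ⋉ 𝔥_ω be the double extension (bracket extending that of 𝔥_ω with [D,v] = D(v) for v ∈ 𝔥_ω). Define J̄ ∈ End(𝔤) by J̄(x) = J(x) for x ∈ 𝔥, J̄(ξ) = D, J̄(D) = −ξ. Then N_J̄ = 0 on 𝔤 if and only if J̄(D(x)) = D(J(x)) for all x ∈ 𝔥. -/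
lemma nij_self {L : Type*} [LieRing L] [LieAlgebra ℝ L] (F : L →ₗ[ℝ] L) (a : L) :
    nijenhuis F a a = 0 := by
  rw [nijenhuis, lie_self, map_zero, map_zero, lie_self, ← lie_skew (F a) a, map_neg]
  abel

lemma nij_antisym {L : Type*} [LieRing L] [LieAlgebra ℝ L] (F : L →ₗ[ℝ] L) (a b : L) :
    nijenhuis F b a = -nijenhuis F a b := by
  rw [nijenhuis, nijenhuis, ← lie_skew a b, ← lie_skew (F a) (F b), ← lie_skew a (F b),
    ← lie_skew (F a) b, map_neg, map_neg, map_neg, map_neg]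
  abel

def nijL {L : Type*} [LieRing L] [LieAlgebra ℝ L] (F : L →ₗ[ℝ] L) : L →ₗ[ℝ] L →ₗ[ℝ] L :=
  LinearMap.mk₂ ℝ (nijenhuis F)
    (fun a b c => by simp only [nijenhuis, add_lie, lie_add, map_add]; abel)
    (fun s a c => by
      simp only [nijenhuis, smul_lie, lie_smul, map_smul, smul_sub, smul_add])
    (fun a b c => by simp only [nijenhuis, add_lie, lie_add, map_add]; abel)
    (fun s a c => by
      simp only [nijenhuis, smul_lie, lie_smul, map_smul, smul_sub, smul_add])

@[simp] lemma nijL_apply {L : Type*} [LieRing L] [LieAlgebra ℝ L] (F : L →ₗ[ℝ] L) (a b : L) :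
    nijL F a b = nijenhuis F a b := rfl

/-- Let `H` be a real Lie algebra with a symplectic form `ω` (a nondegenerate 2-cocycle)
and a compatible complex structure `J`.  Let `G = H(D,ω) = ℝD ⋉ H_ω` be the double
extension of `H` by `ω` and a derivation `D` of the central extension `H_ω = H ⊕ ℝξ`
with `D(ξ) = 0`.  Define `J̄` by `J̄ = J` on `H`, `J̄(ξ) = D`, `J̄(D) = −ξ`.  Then
`N_J̄ = 0` on `G` if and only if `J̄(D(x)) = D(J(x))` for all `x ∈ H`. -/
theorem double_extension_complex_structure_integrable_iff
    {H G : Type*} [LieRing H] [LieAlgebra ℝ H] [LieRing G] [LieAlgebra ℝ G]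
    -- symplectic 2-cocycle ω on H
    (ω : H →ₗ[ℝ] H →ₗ[ℝ] ℝ)
    (hω_alt : ∀ x : H, ω x x = 0)
    (hω_cocycle : ∀ x y w : H, ω ⁅x, y⁆ w + ω ⁅y, w⁆ x + ω ⁅w, x⁆ y = 0)
    (hω_nondeg : ∀ x : H, (∀ y : H, ω x y = 0) → x = 0)
    -- compatible complex structure J on H
    (J : H →ₗ[ℝ] H)
    (hJ2 : ∀ x : H, J (J x) = -x)
    (hNJ : ∀ x y : H, nijenhuis J x y = 0)
    (hcompat : ∀ x y : H, ω (J x) (J y) = ω x y)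
    -- G = ℝD ⋉ H_ω is the double extension, with central element ξ and derivation D
    (i : H →ₗ[ℝ] G) (ξ D : G)
    (hdecomp : ∀ v : G, ∃! t : H × ℝ × ℝ, v = i t.1 + t.2.1 • ξ + t.2.2 • D)
    (hbr : ∀ x y : H, ⁅i x, i y⁆ = i ⁅x, y⁆ + ω x y • ξ)
    (hξcentral : ∀ x : H, ⁅i x, ξ⁆ = 0)
    (hDξ : ⁅D, ξ⁆ = 0)
    (hDpres : ∀ x : H, ∃ y : H, ∃ m : ℝ, ⁅D, i x⁆ = i y + m • ξ)
    -- J̄ on G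
    (Jb : G →ₗ[ℝ] G)
    (hJbH : ∀ x : H, Jb (i x) = i (J x))
    (hJbξ : Jb ξ = D) (hJbD : Jb D = -ξ) :
    (∀ U V : G, nijenhuis Jb U V = 0) ↔ (∀ x : H, Jb ⁅D, i x⁆ = ⁅D, i (J x)⁆) := by
  -- ω(x, Jy) + ω(Jx, y) = 0
  have hωJ : ∀ x y : H, ω x (J y) = -(ω (J x) y) := by
    intro x y
    have h := hcompat x (J y)
    rw [hJ2 y] at h
    simp only [map_neg, LinearMap.neg_apply] at h
    linarith
  -- Jb² kills ⁅D, i x⁆ up to sign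
  have hJbJbD : ∀ x : H, Jb (Jb ⁅D, i x⁆) = -⁅D, i x⁆ := by
    intro x
    obtain ⟨y, m, h⟩ := hDpres x
    rw [h]
    simp only [map_add, map_smul, hJbH, hJbξ, hJbD, hJ2, map_neg, smul_neg]
    abel
  -- the basic computations
  have key1 : ∀ x y : H, nijenhuis Jb (i x) (i y) = 0 := by
    intro x y
    have hN := hNJ x y
    rw [nijenhuis] at hN
    simp only [nijenhuis, hJbH, hbr, map_add, map_smul, hJbξ, hJbD, hJbH]
    have e1 : J ⁅J x, y⁆ = J (J ⁅x, y⁆) + ⁅J x, J y⁆ - J ⁅x, J y⁆ - 0 := by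
      rw [← hN]; abel
    rw [e1, hωJ x y, hcompat x y]
    simp only [map_add, map_sub, map_zero, hJ2]
    module
  have key2 : ∀ x : H, nijenhuis Jb (i x) ξ = Jb ⁅D, i x⁆ - ⁅D, i (J x)⁆ := by
    intro x
    rw [nijenhuis, hξcentral, hJbξ, hJbH, hξcentral (J x), ← lie_skew (i x) D,
      ← lie_skew (i (J x)) D]
    simp only [map_zero, map_neg]
    abel
  have key3 : ∀ x : H, nijenhuis Jb (i x) D = ⁅D, i x⁆ + Jb ⁅D, i (J x)⁆ := by
    intro x
    rw [nijenhuis, hJbD, hJbH, ← lie_skew (i x) D, ← lie_skew (i (J x)) D]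
    simp only [map_neg, hJbJbD, lie_neg, hξcentral, neg_zero, map_zero, neg_neg]
    abel
  have key4 : nijenhuis Jb ξ D = 0 := by
    rw [nijenhuis, hJbξ, hJbD, ← lie_skew ξ D, hDξ, lie_neg, lie_self, lie_neg, hDξ]
    simp
  constructor
  · intro h x
    have h2 := h (i x) ξ
    rw [key2 x] at h2
    exact sub_eq_zero.mp h2
  · intro hcomm U V
    obtain ⟨⟨x, a, b⟩, hU, -⟩ := hdecomp U
    obtain ⟨⟨y, c, e⟩, hV, -⟩ := hdecomp V
    have hgen : ∀ P Q : G, nijenhuis Jb P Q = nijL Jb P Q := fun _ _ => rfl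
    have hxξ : ∀ z : H, nijenhuis Jb (i z) ξ = 0 := by
      intro z; rw [key2 z, hcomm z, sub_self]
    have hxD : ∀ z : H, nijenhuis Jb (i z) D = 0 := by
      intro z
      rw [key3 z, hcomm (J z), hJ2, map_neg, lie_neg]
      abel
    rw [hgen, hU, hV]
    simp only [map_add, map_smul, LinearMap.add_apply, LinearMap.smul_apply, nijL_apply]
    rw [key1 x y, hxξ x, hxD x, key4, nij_self Jb ξ, nij_self Jb D,
      nij_antisym Jb (i y) ξ, nij_antisym Jb (i y) D, nij_antisym Jb ξ D,
      hxξ y, hxD y, key4]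
    simp
end

section
/- In the double-extension setting described in the context, M(x,y) = 0 for all x,y ∈ Ker(ᾱ) if and only if θ(Φ̄(x),y) + θ(x,Φ̄(y)) = 0 for all x,y ∈ Ker(ᾱ). -/
/-- The tensor `M(U,V) = −[U,V] + [FU,FV] − F([FU,V]) − F([U,FV])`. -/
def Mtensor {L : Type*} [LieRing L] [LieAlgebra ℝ L] (F : L →ₗ[ℝ] L) (x y : L) : L :=
  -⁅x, y⁆ + ⁅F x, F y⁆ - F ⁅F x, y⁆ - F ⁅x, F y⁆

/-- `M(x,y) = 0` for all `x, y ∈ Ker(ᾱ)` if and only if `θ(Φ̄x, y) + θ(x, Φ̄y) = 0` for all `x, y ∈ Ker(ᾱ)`. -/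
theorem M_vanishes_on_kernel_iff
    {G E : Type*} [LieRing G] [LieAlgebra ℝ G] [LieRing E] [LieAlgebra ℝ E]
    -- the Sasakian structure (ḡ, ξ̄, ᾱ, Φ̄) on G
    (gb : G →ₗ[ℝ] G →ₗ[ℝ] ℝ) (ξb : G) (αb : G →ₗ[ℝ] ℝ) (Φb : G →ₗ[ℝ] G)
    (hgb_symm : ∀ x y : G, gb x y = gb y x)
    (hgb_pos : ∀ x : G, x ≠ 0 → 0 < gb x x)
    (hαbξb : αb ξb = 1)
    (hΦb2 : ∀ x : G, Φb (Φb x) = -x + αb x • ξb)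
    (hΦbg : ∀ x y : G, gb (Φb x) (Φb y) = gb x y - αb x * αb y)
    (hgbdα : ∀ x y : G, gb x (Φb y) = -(αb ⁅x, y⁆))
    (hNΦb : ∀ x y : G, nijenhuis Φb x y = αb ⁅x, y⁆ • ξb)
    -- a 2-cocycle θ on G
    (θ : G →ₗ[ℝ] G →ₗ[ℝ] ℝ)
    (hθ_alt : ∀ x : G, θ x x = 0)
    (hθ_cocycle : ∀ x y w : G, θ ⁅x, y⁆ w + θ ⁅y, w⁆ x + θ ⁅w, x⁆ y = 0)
    -- E = 𝔤(θ,D) = ℝD ⋉ 𝔤_θ is the double extension, with central element z of 𝔤_θ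
    -- and derivation D ∈ Der(𝔤_θ) realized as the element Dv (so D(v) = ⁅Dv, v⁆ on 𝔤_θ)
    (i : G →ₗ[ℝ] E) (z Dv : E)
    (hdecomp : ∀ v : E, ∃! t : G × ℝ × ℝ, v = i t.1 + t.2.1 • z + t.2.2 • Dv)
    (hbr : ∀ x y : G, ⁅i x, i y⁆ = i ⁅x, y⁆ + θ x y • z)
    (hzcentral : ∀ x : G, ⁅i x, z⁆ = 0)
    (hDpres : ∀ x : G, ∃ y : G, ∃ m : ℝ, ⁅Dv, i x⁆ = i y + m • z)
    (hDz : ∃ y : G, ∃ m : ℝ, ⁅Dv, z⁆ = i y + m • z)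
    -- the scalars a, b, c, d and the vector u
    (a b c d : ℝ) (u : G) (hu : αb u = 0) (hab : a + b = 1)
    (hcd : c + d = 0) (hc : c ≠ 0) (hδ : a * d - b * c ≠ 0)
    -- the contact form α = ᾱ + z* on E, with Reeb vector ξ, and the vector w
    (α : E →ₗ[ℝ] ℝ) (hαi : ∀ x : G, α (i x) = αb x) (hαz : α z = 1) (hαD : α Dv = 0)
    (ξ w : E) (hξ : ξ = i u + a • i ξb + b • z) (hw : w = c • i ξb + d • z)
    (hreeb : ∀ v : E, α ⁅ξ, v⁆ = 0)
    (hcontact : ∀ v : E, (∀ v' : E, α ⁅v, v'⁆ = 0) → ∃ r : ℝ, v = r • ξ)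
    -- Φ ∈ End(E): Φ = Φ̄ on Ker(ᾱ), Φ(w) = D, Φ(D) = −w, Φ(ξ) = 0
    (Φ : E →ₗ[ℝ] E)
    (hΦker : ∀ x : G, αb x = 0 → Φ (i x) = i (Φb x))
    (hΦw : Φ w = Dv) (hΦD : Φ Dv = -w) (hΦξ : Φ ξ = 0)
    :
    (∀ x y : G, αb x = 0 → αb y = 0 → Mtensor Φ (i x) (i y) = 0) ↔
    (∀ x y : G, αb x = 0 → αb y = 0 → θ (Φb x) y + θ x (Φb y) = 0) := by
  
  -- ## Step 1: Φb ξb = 0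
  have hlie0 : (⁅ξb, ξb⁆ : G) = 0 := lie_self ξb
  have h1 : gb ξb (Φb ξb) = 0 := by rw [hgbdα, hlie0, map_zero, neg_zero]
  have hΦ2ξ : Φb (Φb ξb) = 0 := by rw [hΦb2, hαbξb, one_smul, neg_add_cancel]
  have hA : αb (Φb ξb) = 0 := by
    have h := hΦbg ξb (Φb ξb)
    rw [hΦ2ξ, map_zero, hαbξb, one_mul, h1, zero_sub] at h
    linarith
  have hgΦξ : gb (Φb ξb) (Φb ξb) = 0 := by
    have h := hΦbg (Φb ξb) (Φb ξb)
    rw [hΦ2ξ, map_zero, hA, mul_zero, sub_zero] at h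
    have h0 : gb (0 : G) (0 : G) = 0 := by simp
    linarith [h0]
  have hΦbξb : Φb ξb = 0 := by
    by_contra h
    have := hgb_pos _ h
    rw [hgΦξ] at this
    exact lt_irrefl 0 this
  -- ## Step 2: gb · ξb = αb, and αb ∘ Φb = 0
  have hgξ : ∀ v : G, gb v ξb = αb v := by
    intro v
    have h := hΦbg v ξb
    rw [hΦbξb, map_zero, hαbξb, mul_one] at h
    linarith
  have hαΦ : ∀ v : G, αb (Φb v) = 0 := by
    intro v
    have h2 : αb ⁅v, ξb⁆ = 0 := by
      have h := hgbdα v ξb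
      rw [hΦbξb, map_zero] at h
      linarith
    have h3 : αb ⁅ξb, v⁆ = 0 := by
      rw [← lie_skew, map_neg, h2, neg_zero]
    have h4 := hgbdα ξb v
    rw [h3, neg_zero] at h4
    rw [← hgξ (Φb v), hgb_symm, h4]
  -- ## Step 3: αb ⁅Φb x, y⁆ + αb ⁅x, Φb y⁆ = 0 on the kernel
  have hsum : ∀ x y : G, αb x = 0 → αb y = 0 →
      αb ⁅x, Φb y⁆ = -(αb ⁅Φb x, y⁆) := by
    intro x y hx hy
    have hb1 : αb ⁅Φb x, y⁆ = -(gb x y) := by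
      have h := hgbdα (Φb x) y
      have h2 := hΦbg x y
      rw [hx, zero_mul, sub_zero] at h2
      rw [h2] at h
      linarith
    have hb2 : αb ⁅x, Φb y⁆ = gb x y := by
      have h := hgbdα x (Φb y)
      rw [hΦb2, hy, zero_smul, add_zero, map_neg] at h
      linarith
    rw [hb1, hb2, neg_neg]
  -- ## Step 4: Φ on i v for general v
  have hΦv : ∀ v : G, Φ (i v) = i (Φb v) + αb v • Φ (i ξb) := by
    intro v
    have hv0 : αb (v - αb v • ξb) = 0 := by
      rw [map_sub, map_smul, hαbξb, smul_eq_mul, mul_one, sub_self]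
    have h := hΦker _ hv0
    simp only [map_sub, map_smul, hΦbξb, smul_zero, sub_zero] at h
    exact eq_add_of_sub_eq h
  -- ## Step 5: the formula for δ • Φ z
  have hE1 : c • Φ (i ξb) + d • Φ z = Dv := by
    have h := hΦw
    rw [hw, map_add, map_smul, map_smul] at h
    exact h
  have hE2 : i (Φb u) + a • Φ (i ξb) + b • Φ z = 0 := by
    have h := hΦξ
    rw [hξ, map_add, map_add, map_smul, map_smul, hΦker u hu] at h
    exact h
  have hδΦz : (a * d - b * c) • Φ z = a • Dv + c • i (Φb u) := by
    linear_combination (norm := module) a • hE1 - c • hE2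
  -- ## Step 6: the key identity in G
  have hG0 : ∀ x y : G, (⁅Φb x, Φb y⁆ : G) = ⁅x, y⁆ + Φb ⁅Φb x, y⁆ + Φb ⁅x, Φb y⁆ := by
    intro x y
    have hN := hNΦb x y
    unfold nijenhuis at hN
    have hP := hΦb2 ⁅x, y⁆
    linear_combination (norm := module) hN - hP
  -- ## Step 7: the formula for M on the kernel
  have hM : ∀ x y : G, αb x = 0 → αb y = 0 →
      Mtensor Φ (i x) (i y)
        = (θ (Φb x) (Φb y) - θ x y) • z - (θ (Φb x) y + θ x (Φb y)) • Φ z := by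
    intro x y hx hy
    have hGid : i ⁅Φb x, Φb y⁆ = i ⁅x, y⁆ + i (Φb ⁅Φb x, y⁆) + i (Φb ⁅x, Φb y⁆) := by
      rw [hG0 x y, map_add, map_add]
    unfold Mtensor
    rw [hΦker x hx, hΦker y hy, hbr x y, hbr (Φb x) (Φb y), hbr (Φb x) y, hbr x (Φb y)]
    rw [map_add, map_add, map_smul, map_smul, hΦv ⁅Φb x, y⁆, hΦv ⁅x, Φb y⁆]
    rw [hGid, hsum x y hx hy]
    module
  -- ## Step 8: the equivalence
  constructor
  · -- M = 0 implies the θ-condition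
    intro hMv
    have hθΦΦ : ∀ x y : G, αb x = 0 → αb y = 0 → θ (Φb x) (Φb y) = θ x y := by
      intro x y hx hy
      have h0 := hMv x y hx hy
      rw [hM x y hx hy] at h0
      have h0' : (θ (Φb x) (Φb y) - θ x y) • z
          = (θ (Φb x) y + θ x (Φb y)) • Φ z := sub_eq_zero.mp h0
      set A := θ (Φb x) (Φb y) - θ x y with hAdef
      set T := θ (Φb x) y + θ x (Φb y) with hTdef
      have h1 : ((a * d - b * c) * A) • z = i ((T * c) • Φb u) + (T * a) • Dv := by
        rw [map_smul]
        calc ((a * d - b * c) * A) • z = (a * d - b * c) • (A • z) := by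
              rw [mul_smul]
          _ = (a * d - b * c) • (T • Φ z) := by rw [h0']
          _ = T • ((a * d - b * c) • Φ z) := smul_comm _ _ _
          _ = T • (a • Dv + c • i (Φb u)) := by rw [hδΦz]
          _ = (T * c) • i (Φb u) + (T * a) • Dv := by
              rw [smul_add, smul_smul, smul_smul]
              abel
      obtain ⟨t0, _, huniq⟩ := hdecomp (((a * d - b * c) * A) • z)
      have e1 : ((a * d - b * c) * A) • z
          = i (0 : G) + ((a * d - b * c) * A) • z + (0 : ℝ) • Dv := by simp
      have e2 : ((a * d - b * c) * A) • z
          = i ((T * c) • Φb u) + (0 : ℝ) • z + (T * a) • Dv := by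
        rw [h1]; simp
      have k1 := huniq ((0 : G), ((a * d - b * c) * A, (0 : ℝ))) e1
      have k2 := huniq (((T * c) • Φb u), ((0 : ℝ), T * a)) e2
      have heq := k1.trans k2.symm
      have hz0 : (a * d - b * c) * A = 0 := by
        have := congrArg (fun t : G × ℝ × ℝ => t.2.1) heq
        simpa using this
      have hA0 : A = 0 := by
        rcases mul_eq_zero.mp hz0 with h | h
        · exact absurd h hδ
        · exact h
      rw [hAdef] at hA0
      linarith
    intro x y hx hy
    have h := hθΦΦ x (Φb y) hx (hαΦ y)
    rw [hΦb2 y, hy, zero_smul, add_zero, map_neg] at h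
    -- h : -(θ (Φb x) y) = θ x (Φb y)
    linarith
  · -- the θ-condition implies M = 0
    intro hT x y hx hy
    have hθΦΦ : θ (Φb x) (Φb y) = θ x y := by
      have h := hT x (Φb y) hx (hαΦ y)
      rw [hΦb2 y, hy, zero_smul, add_zero, map_neg] at h
      linarith
    rw [hM x y hx hy, hθΦΦ, hT x y hx hy, sub_self, zero_smul, zero_smul, sub_zero]
end

section
/- In the double-extension setting described in the context, assume ξ̄ ∈ Rad(θ). Then M(x,w) = 0 for all x ∈ Ker(ᾱ) if and only if D(Φ̄(x)) = Φ(D(x)) for all x ∈ Ker(ᾱ). -/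
/-- Assuming `ξ̄ ∈ Rad(θ)`: `M(x,w) = 0` for all `x ∈ Ker(ᾱ)` iff `D(Φ̄x) = Φ(Dx)` for all `x ∈ Ker(ᾱ)`. -/
theorem M_x_w_vanishes_iff
    {G E : Type*} [LieRing G] [LieAlgebra ℝ G] [LieRing E] [LieAlgebra ℝ E]
    -- the Sasakian structure (ḡ, ξ̄, ᾱ, Φ̄) on G
    (gb : G →ₗ[ℝ] G →ₗ[ℝ] ℝ) (ξb : G) (αb : G →ₗ[ℝ] ℝ) (Φb : G →ₗ[ℝ] G)
    (hgb_symm : ∀ x y : G, gb x y = gb y x)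
    (hgb_pos : ∀ x : G, x ≠ 0 → 0 < gb x x)
    (hαbξb : αb ξb = 1)
    (hΦb2 : ∀ x : G, Φb (Φb x) = -x + αb x • ξb)
    (hΦbg : ∀ x y : G, gb (Φb x) (Φb y) = gb x y - αb x * αb y)
    (hgbdα : ∀ x y : G, gb x (Φb y) = -(αb ⁅x, y⁆))
    (hNΦb : ∀ x y : G, nijenhuis Φb x y = αb ⁅x, y⁆ • ξb)
    -- a 2-cocycle θ on G
    (θ : G →ₗ[ℝ] G →ₗ[ℝ] ℝ)
    (hθ_alt : ∀ x : G, θ x x = 0)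
    (hθ_cocycle : ∀ x y w : G, θ ⁅x, y⁆ w + θ ⁅y, w⁆ x + θ ⁅w, x⁆ y = 0)
    -- E = 𝔤(θ,D) = ℝD ⋉ 𝔤_θ is the double extension, with central element z of 𝔤_θ
    -- and derivation D ∈ Der(𝔤_θ) realized as the element Dv (so D(v) = ⁅Dv, v⁆ on 𝔤_θ)
    (i : G →ₗ[ℝ] E) (z Dv : E)
    (hdecomp : ∀ v : E, ∃! t : G × ℝ × ℝ, v = i t.1 + t.2.1 • z + t.2.2 • Dv)
    (hbr : ∀ x y : G, ⁅i x, i y⁆ = i ⁅x, y⁆ + θ x y • z)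
    (hzcentral : ∀ x : G, ⁅i x, z⁆ = 0)
    (hDpres : ∀ x : G, ∃ y : G, ∃ m : ℝ, ⁅Dv, i x⁆ = i y + m • z)
    (hDz : ∃ y : G, ∃ m : ℝ, ⁅Dv, z⁆ = i y + m • z)
    -- the scalars a, b, c, d and the vector u
    (a b c d : ℝ) (u : G) (hu : αb u = 0) (hab : a + b = 1)
    (hcd : c + d = 0) (hc : c ≠ 0) (hδ : a * d - b * c ≠ 0)
    -- the contact form α = ᾱ + z* on E, with Reeb vector ξ, and the vector w
    (α : E →ₗ[ℝ] ℝ) (hαi : ∀ x : G, α (i x) = αb x) (hαz : α z = 1) (hαD : α Dv = 0)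
    (ξ w : E) (hξ : ξ = i u + a • i ξb + b • z) (hw : w = c • i ξb + d • z)
    (hreeb : ∀ v : E, α ⁅ξ, v⁆ = 0)
    (hcontact : ∀ v : E, (∀ v' : E, α ⁅v, v'⁆ = 0) → ∃ r : ℝ, v = r • ξ)
    -- Φ ∈ End(E): Φ = Φ̄ on Ker(ᾱ), Φ(w) = D, Φ(D) = −w, Φ(ξ) = 0
    (Φ : E →ₗ[ℝ] E)
    (hΦker : ∀ x : G, αb x = 0 → Φ (i x) = i (Φb x))
    (hΦw : Φ w = Dv) (hΦD : Φ Dv = -w) (hΦξ : Φ ξ = 0)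
    (hrad : ∀ y : G, θ ξb y = 0)
    :
    (∀ x : G, αb x = 0 → Mtensor Φ (i x) w = 0) ↔
    (∀ x : G, αb x = 0 → ⁅Dv, i (Φb x)⁆ = Φ ⁅Dv, i x⁆) := by
  -- Φb ξb = 0
  have hΦbξb : Φb ξb = 0 := by
    have h1 : Φb (Φb ξb) = 0 := by
      rw [hΦb2, hαbξb, one_smul, neg_add_cancel]
    have h2 : gb ξb (Φb ξb) = 0 := by
      rw [hgbdα, lie_self, map_zero, neg_zero]
    have h3 : αb (Φb ξb) = 0 := by
      have := hΦbg ξb (Φb ξb)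
      rw [h1, map_zero, hαbξb, one_mul, h2] at this
      linarith
    have h4 : gb (Φb ξb) (Φb ξb) = 0 := by
      have := hΦbg (Φb ξb) (Φb ξb)
      rw [h1, map_zero, h3, mul_zero, sub_zero] at this
      simpa using this.symm
    by_contra hne
    exact absurd h4 (ne_of_gt (hgb_pos _ hne))
  -- αb ⁅x, ξb⁆ = 0 for all x
  have hαξ : ∀ x : G, αb ⁅x, ξb⁆ = 0 := by
    intro x
    have := hgbdα x ξb
    rw [hΦbξb, map_zero] at this
    linarith
  -- Φb ⁅Φb x, ξb⁆ = -⁅x, ξb⁆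
  have hkey : ∀ x : G, Φb ⁅Φb x, ξb⁆ = -⁅x, ξb⁆ := by
    intro x
    have hN := hNΦb x ξb
    unfold nijenhuis at hN
    simp only [hΦbξb, hαξ, zero_smul, lie_zero, map_zero, add_zero, sub_zero,
      hΦb2] at hN
    have : -⁅x, ξb⁆ - Φb ⁅Φb x, ξb⁆ = 0 := hN
    linear_combination (norm := module) -this
  -- θ x ξb = 0
  have hθξb : ∀ x : G, θ x ξb = 0 := by
    intro x
    have h := hθ_alt (x + ξb)
    simp only [map_add, LinearMap.add_apply, hθ_alt, hrad] at h
    linarith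
  -- the key computation
  have hM : ∀ x : G, αb x = 0 →
      Mtensor Φ (i x) w = Φ ⁅Dv, i x⁆ - ⁅Dv, i (Φb x)⁆ := by
    intro x hx
    have hb1 : ⁅i x, w⁆ = c • i ⁅x, ξb⁆ := by
      rw [hw, lie_add, lie_smul, lie_smul, hzcentral, smul_zero, add_zero,
        hbr, hθξb, zero_smul, add_zero]
    have hb2 : ⁅i (Φb x), w⁆ = c • i ⁅Φb x, ξb⁆ := by
      rw [hw, lie_add, lie_smul, lie_smul, hzcentral, smul_zero, add_zero,
        hbr, hθξb, zero_smul, add_zero]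
    unfold Mtensor
    rw [hΦker x hx, hΦw, hb1, hb2, map_smul, hΦker _ (hαξ (Φb x)), hkey,
      ← lie_skew Dv (i x), map_neg, ← lie_skew Dv (i (Φb x))]
    simp only [map_neg]
    module
  constructor
  · intro h x hx
    have := h x hx
    rw [hM x hx] at this
    have := sub_eq_zero.mp this
    exact this.symm
  · intro h x hx
    rw [hM x hx, h x hx, sub_self]
end

section
/- In the double-extension setting described in the context, assume ξ̄ ∈ Rad(θ). Then M(x,D) = 0 for all x ∈ Ker(ᾱ) if and only if Φ(D(x)) = D(Φ̄(x)) for all x ∈ Ker(ᾱ). -/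
/-- Assuming `ξ̄ ∈ Rad(θ)`: `M(x,D) = 0` for all `x ∈ Ker(ᾱ)` iff `Φ(Dx) = D(Φ̄x)` for all `x ∈ Ker(ᾱ)`. -/
theorem M_x_D_vanishes_iff
    {G E : Type*} [LieRing G] [LieAlgebra ℝ G] [LieRing E] [LieAlgebra ℝ E]
    -- the Sasakian structure (ḡ, ξ̄, ᾱ, Φ̄) on G
    (gb : G →ₗ[ℝ] G →ₗ[ℝ] ℝ) (ξb : G) (αb : G →ₗ[ℝ] ℝ) (Φb : G →ₗ[ℝ] G)
    (hgb_symm : ∀ x y : G, gb x y = gb y x)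
    (hgb_pos : ∀ x : G, x ≠ 0 → 0 < gb x x)
    (hαbξb : αb ξb = 1)
    (hΦb2 : ∀ x : G, Φb (Φb x) = -x + αb x • ξb)
    (hΦbg : ∀ x y : G, gb (Φb x) (Φb y) = gb x y - αb x * αb y)
    (hgbdα : ∀ x y : G, gb x (Φb y) = -(αb ⁅x, y⁆))
    (hNΦb : ∀ x y : G, nijenhuis Φb x y = αb ⁅x, y⁆ • ξb)
    -- a 2-cocycle θ on G
    (θ : G →ₗ[ℝ] G →ₗ[ℝ] ℝ)
    (hθ_alt : ∀ x : G, θ x x = 0)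
    (hθ_cocycle : ∀ x y w : G, θ ⁅x, y⁆ w + θ ⁅y, w⁆ x + θ ⁅w, x⁆ y = 0)
    -- E = 𝔤(θ,D) = ℝD ⋉ 𝔤_θ is the double extension, with central element z of 𝔤_θ
    -- and derivation D ∈ Der(𝔤_θ) realized as the element Dv (so D(v) = ⁅Dv, v⁆ on 𝔤_θ)
    (i : G →ₗ[ℝ] E) (z Dv : E)
    (hdecomp : ∀ v : E, ∃! t : G × ℝ × ℝ, v = i t.1 + t.2.1 • z + t.2.2 • Dv)
    (hbr : ∀ x y : G, ⁅i x, i y⁆ = i ⁅x, y⁆ + θ x y • z)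
    (hzcentral : ∀ x : G, ⁅i x, z⁆ = 0)
    (hDpres : ∀ x : G, ∃ y : G, ∃ m : ℝ, ⁅Dv, i x⁆ = i y + m • z)
    (hDz : ∃ y : G, ∃ m : ℝ, ⁅Dv, z⁆ = i y + m • z)
    -- the scalars a, b, c, d and the vector u
    (a b c d : ℝ) (u : G) (hu : αb u = 0) (hab : a + b = 1)
    (hcd : c + d = 0) (hc : c ≠ 0) (hδ : a * d - b * c ≠ 0)
    -- the contact form α = ᾱ + z* on E, with Reeb vector ξ, and the vector w
    (α : E →ₗ[ℝ] ℝ) (hαi : ∀ x : G, α (i x) = αb x) (hαz : α z = 1) (hαD : α Dv = 0)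
    (ξ w : E) (hξ : ξ = i u + a • i ξb + b • z) (hw : w = c • i ξb + d • z)
    (hreeb : ∀ v : E, α ⁅ξ, v⁆ = 0)
    (hcontact : ∀ v : E, (∀ v' : E, α ⁅v, v'⁆ = 0) → ∃ r : ℝ, v = r • ξ)
    -- Φ ∈ End(E): Φ = Φ̄ on Ker(ᾱ), Φ(w) = D, Φ(D) = −w, Φ(ξ) = 0
    (Φ : E →ₗ[ℝ] E)
    (hΦker : ∀ x : G, αb x = 0 → Φ (i x) = i (Φb x))
    (hΦw : Φ w = Dv) (hΦD : Φ Dv = -w) (hΦξ : Φ ξ = 0)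
    (hrad : ∀ y : G, θ ξb y = 0)
    :
    (∀ x : G, αb x = 0 → Mtensor Φ (i x) Dv = 0) ↔
    (∀ x : G, αb x = 0 → Φ ⁅Dv, i x⁆ = ⁅Dv, i (Φb x)⁆) := by
  -- scalar preliminaries
  have hdne : d ≠ 0 := fun h => hc (by linarith)
  have hc' : c = -d := by linarith
  have ha' : a = 1 - b := by linarith
  subst hc'
  subst ha'
  -- ξb ≠ 0
  have hξbne : ξb ≠ 0 := by
    intro h; rw [h, map_zero] at hαbξb; exact one_ne_zero hαbξb.symm
  -- Φb ξb = 0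
  have hΦbξb : Φb ξb = 0 := by
    have h1 : gb ξb (Φb ξb) = 0 := by simpa using hgbdα ξb ξb
    have h2 : Φb (Φb ξb) = 0 := by rw [hΦb2, hαbξb, one_smul, neg_add_cancel]
    have h3 : αb (Φb ξb) = 0 := by
      have := hΦbg ξb (Φb ξb)
      rw [h2, map_zero, h1, hαbξb] at this
      simpa using this.symm
    have h4 : gb (Φb ξb) (Φb ξb) = 0 := by
      have := hΦbg (Φb ξb) (Φb ξb)
      rw [h2, h3, map_zero] at this
      simpa using this.symm
    by_contra h
    exact absurd h4 (ne_of_gt (hgb_pos _ h))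
  -- αb ∘ Φb = 0
  have hαΦb : ∀ x : G, αb (Φb x) = 0 := by
    intro x
    have h1 : Φb (Φb (Φb x)) = -Φb x + αb (Φb x) • ξb := hΦb2 (Φb x)
    have h2 : Φb (Φb (Φb x)) = -Φb x := by
      rw [hΦb2 x, map_add, map_neg, map_smul, hΦbξb, smul_zero, add_zero]
    rw [h2] at h1
    have h3 : αb (Φb x) • ξb = 0 := by
      have := congrArg (fun t => -(-Φb x) + t) h1
      simpa using this.symm
    rcases smul_eq_zero.mp h3 with h | h
    · exact h
    · exact absurd h hξbne
  -- αb ⁅x, ξb⁆ = 0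
  have hαbr : ∀ x : G, αb ⁅x, ξb⁆ = 0 := by
    intro x
    have := hgbdα x ξb
    rw [hΦbξb, map_zero] at this
    linarith [this]
  -- Φb ⁅x, ξb⁆ = ⁅Φb x, ξb⁆
  have hL4' : ∀ x : G, Φb ⁅Φb x, ξb⁆ = -⁅x, ξb⁆ := by
    intro x
    have hN := hNΦb x ξb
    rw [hαbr x, zero_smul] at hN
    unfold nijenhuis at hN
    rw [hΦbξb, lie_zero, lie_zero, map_zero, hΦb2, hαbr x, zero_smul, add_zero] at hN
    have h2 : -⁅x, ξb⁆ - Φb ⁅Φb x, ξb⁆ = 0 := by simpa using hN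
    linear_combination (norm := module) -h2
  have hL4 : ∀ x : G, Φb ⁅x, ξb⁆ = ⁅Φb x, ξb⁆ := by
    intro x
    have h1 := congrArg Φb (hL4' x)
    rw [hΦb2, hαbr, zero_smul, add_zero, map_neg] at h1
    linear_combination (norm := module) h1
  -- θ skew, θ x ξb = 0
  have hθskew : ∀ x y : G, θ x y = -θ y x := by
    intro x y
    have h := hθ_alt (x + y)
    rw [map_add] at h
    simp only [LinearMap.add_apply, map_add] at h
    have hx := hθ_alt x; have hy := hθ_alt y
    linarith
  have hθxξb : ∀ x : G, θ x ξb = 0 := by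
    intro x; rw [hθskew, hrad, neg_zero]
  -- Φ on i x in general
  have hΦi : ∀ x : G, Φ (i x) = i (Φb x) + αb x • Φ (i ξb) := by
    intro x
    have h0 : αb (x - αb x • ξb) = 0 := by
      rw [map_sub, map_smul, hαbξb, smul_eq_mul, mul_one, sub_self]
    have h1 := hΦker _ h0
    have h2 : Φb (x - αb x • ξb) = Φb x := by
      rw [map_sub, map_smul, hΦbξb, smul_zero, sub_zero]
    rw [h2] at h1
    have h3 : (i x : E) = i (x - αb x • ξb) + αb x • i ξb := by
      rw [map_sub, map_smul]; abel
    rw [h3, map_add, map_smul, h1]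
  -- linear system for Φ (i ξb) and Φ z
  have heq1 : (-d) • Φ (i ξb) + d • Φ z = Dv := by
    have h := hΦw
    rw [hw, map_add, map_smul, map_smul] at h
    exact h
  have heq2 : i (Φb u) + (1 - b) • Φ (i ξb) + b • Φ z = 0 := by
    have h := hΦξ
    rw [hξ, map_add, map_add, map_smul, map_smul, hΦker u hu] at h
    exact h
  have hP : Φ (i ξb) = -(i (Φb u)) - (d⁻¹ * b) • Dv := by
    have hkey : d • Φ (i ξb) = d • (-(i (Φb u)) - (d⁻¹ * b) • Dv) := by
      have e : d • (-(i (Φb u)) - (d⁻¹ * b) • Dv) = -(d • i (Φb u)) - b • Dv := by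
        rw [smul_sub, smul_neg, smul_smul, mul_inv_cancel_left₀ hdne]
      rw [e]
      linear_combination (norm := module) (-b) • heq1 + d • heq2
    have h5 := congrArg (fun v => d⁻¹ • v) hkey
    simp only [smul_smul, inv_mul_cancel₀ hdne, one_smul] at h5
    exact h5
  have hQ : Φ z = -(i (Φb u)) + (d⁻¹ * (1 - b)) • Dv := by
    have hkey : d • Φ z = d • (-(i (Φb u)) + (d⁻¹ * (1 - b)) • Dv) := by
      have e : d • (-(i (Φb u)) + (d⁻¹ * (1 - b)) • Dv) = -(d • i (Φb u)) + (1 - b) • Dv := by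
        rw [smul_add, smul_neg, smul_smul, mul_inv_cancel_left₀ hdne]
      rw [e]
      linear_combination (norm := module) (1 - b) • heq1 + d • heq2
    have h5 := congrArg (fun v => d⁻¹ • v) hkey
    simp only [smul_smul, inv_mul_cancel₀ hdne, one_smul] at h5
    exact h5
  -- α ∘ Φ = 0
  have hαw : α w = 0 := by
    rw [hw, map_add, map_smul, map_smul, hαi, hαbξb, hαz]
    simp
  have hαΦiξb : α (Φ (i ξb)) = 0 := by
    rw [hP, map_sub, map_neg, map_smul, hαi, hαΦb, hαD]; simp
  have hαΦz : α (Φ z) = 0 := by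
    rw [hQ, map_add, map_neg, map_smul, hαi, hαΦb, hαD]; simp
  have hαΦx : ∀ x : G, α (Φ (i x)) = 0 := by
    intro x
    rw [hΦi, map_add, map_smul, hαi, hαΦb, hαΦiξb, smul_zero, add_zero]
  have hαΦ : ∀ v : E, α (Φ v) = 0 := by
    intro v
    obtain ⟨⟨x, s, t⟩, hv, -⟩ := hdecomp v
    rw [hv, map_add, map_add, map_smul, map_smul, map_add, map_add, map_smul, map_smul,
      hαΦx, hαΦz, hΦD, map_neg, hαw]
    simp
  -- Φ ∘ Φ = -Id + α ⊗ ξ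
  have hΦ2ξb : Φ (Φ (i ξb)) = -(i ξb) + ξ := by
    rw [hP, map_sub, map_neg, map_smul, hΦker _ (hαΦb u), hΦD, hΦb2 u, hu, zero_smul,
      add_zero, map_neg, hξ, hw]
    match_scalars <;> field_simp <;> ring
  have hΦ2z : Φ (Φ z) = -z + ξ := by
    rw [hQ, map_add, map_neg, map_smul, hΦker _ (hαΦb u), hΦD, hΦb2 u, hu, zero_smul,
      add_zero, map_neg, hξ, hw]
    match_scalars <;> field_simp <;> ring
  have hΦ2i : ∀ x : G, Φ (Φ (i x)) = -(i x) + αb x • ξ := by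
    intro x
    rw [hΦi x, map_add, map_smul, hΦker _ (hαΦb x), hΦ2ξb, hΦb2 x, map_add, map_neg, map_smul]
    module
  have hΦ2Dv : Φ (Φ Dv) = -Dv := by
    rw [hΦD, map_neg, hΦw]
  have hΦ2 : ∀ v : E, Φ (Φ v) = -v + α v • ξ := by
    intro v
    obtain ⟨⟨x, s, t⟩, hv, -⟩ := hdecomp v
    have hαv : α (i x + s • z + t • Dv) = αb x + s := by
      rw [map_add, map_add, map_smul, map_smul, hαi, hαz, hαD]
      simp
    rw [hv, map_add, map_add, map_smul, map_smul, map_add, map_add, map_smul, map_smul,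
      hΦ2i, hΦ2z, hΦ2Dv, hαv]
    module
  -- key identity
  have hKI : ∀ x : G, αb x = 0 → Mtensor Φ (i x) Dv = ⁅Dv, i x⁆ + Φ ⁅Dv, i (Φb x)⁆ := by
    intro x hx
    have hxw : ⁅i x, w⁆ = (-d) • i ⁅x, ξb⁆ := by
      rw [hw, lie_add, lie_smul, lie_smul, hzcentral, hbr, hθxξb, zero_smul, add_zero,
        smul_zero, add_zero]
    have hΦxw : ⁅i (Φb x), w⁆ = (-d) • i ⁅Φb x, ξb⁆ := by
      rw [hw, lie_add, lie_smul, lie_smul, hzcentral, hbr, hθxξb, zero_smul, add_zero,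
        smul_zero, add_zero]
    have hΦbr : Φ (i ⁅x, ξb⁆) = i ⁅Φb x, ξb⁆ := by
      rw [hΦker _ (hαbr x), hL4]
    unfold Mtensor
    rw [hΦker x hx, hΦD, lie_neg, lie_neg, hxw, hΦxw, map_neg, map_smul, hΦbr]
    have hsk1 : ⁅i x, Dv⁆ = -⁅Dv, i x⁆ := (lie_skew _ _).symm
    have hsk2 : ⁅i (Φb x), Dv⁆ = -⁅Dv, i (Φb x)⁆ := (lie_skew _ _).symm
    rw [hsk1, hsk2, map_neg]
    abel
  constructor
  · intro hM
    have hα0 : ∀ y : G, αb y = 0 → α ⁅Dv, i y⁆ = 0 := by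
      intro y hy
      have h2 := hKI y hy
      rw [hM y hy] at h2
      have h3 := congrArg α h2
      rw [map_zero, map_add, hαΦ, add_zero] at h3
      exact h3.symm
    intro x hx
    have h2 := hKI x hx
    rw [hM x hx] at h2
    have h3 := congrArg Φ h2
    rw [map_zero, map_add, hΦ2, hα0 (Φb x) (hαΦb x), zero_smul, add_zero] at h3
    linear_combination (norm := module) -h3
  · intro hR x hx
    have hα0 : α ⁅Dv, i x⁆ = 0 := by
      have hy : αb (-(Φb x)) = 0 := by rw [map_neg, hαΦb, neg_zero]
      have h1 := hR _ hy
      have h2 : Φb (-(Φb x)) = x := by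
        rw [map_neg, hΦb2, hx, zero_smul, add_zero, neg_neg]
      rw [h2] at h1
      rw [← h1, hαΦ]
    rw [hKI x hx, ← hR x hx, hΦ2, hα0, zero_smul, add_zero]
    abel
end

section
/- In the double-extension setting described in the context, assume u ∈ Rad(θ) and ξ̄ ∈ Rad(θ). Then M(x,ξ) = 0 for all x ∈ Ker(ᾱ) if and only if [x,u] + Φ([Φ̄(x),u]) = 0 for all x ∈ Ker(ᾱ), where the brackets are taken in 𝔤. -/
/-- Assuming `u, ξ̄ ∈ Rad(θ)`: `M(x,ξ) = 0` for all `x ∈ Ker(ᾱ)` iff `[x,u] + Φ([Φ̄x, u]) = 0` for all `x ∈ Ker(ᾱ)`. -/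
theorem M_x_xi_vanishes_iff
    {G E : Type*} [LieRing G] [LieAlgebra ℝ G] [LieRing E] [LieAlgebra ℝ E]
    -- the Sasakian structure (ḡ, ξ̄, ᾱ, Φ̄) on G
    (gb : G →ₗ[ℝ] G →ₗ[ℝ] ℝ) (ξb : G) (αb : G →ₗ[ℝ] ℝ) (Φb : G →ₗ[ℝ] G)
    (hgb_symm : ∀ x y : G, gb x y = gb y x)
    (hgb_pos : ∀ x : G, x ≠ 0 → 0 < gb x x)
    (hαbξb : αb ξb = 1)
    (hΦb2 : ∀ x : G, Φb (Φb x) = -x + αb x • ξb)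
    (hΦbg : ∀ x y : G, gb (Φb x) (Φb y) = gb x y - αb x * αb y)
    (hgbdα : ∀ x y : G, gb x (Φb y) = -(αb ⁅x, y⁆))
    (hNΦb : ∀ x y : G, nijenhuis Φb x y = αb ⁅x, y⁆ • ξb)
    -- a 2-cocycle θ on G
    (θ : G →ₗ[ℝ] G →ₗ[ℝ] ℝ)
    (hθ_alt : ∀ x : G, θ x x = 0)
    (hθ_cocycle : ∀ x y w : G, θ ⁅x, y⁆ w + θ ⁅y, w⁆ x + θ ⁅w, x⁆ y = 0)
    -- E = 𝔤(θ,D) = ℝD ⋉ 𝔤_θ is the double extension, with central element z of 𝔤_θ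
    -- and derivation D ∈ Der(𝔤_θ) realized as the element Dv (so D(v) = ⁅Dv, v⁆ on 𝔤_θ)
    (i : G →ₗ[ℝ] E) (z Dv : E)
    (hdecomp : ∀ v : E, ∃! t : G × ℝ × ℝ, v = i t.1 + t.2.1 • z + t.2.2 • Dv)
    (hbr : ∀ x y : G, ⁅i x, i y⁆ = i ⁅x, y⁆ + θ x y • z)
    (hzcentral : ∀ x : G, ⁅i x, z⁆ = 0)
    (hDpres : ∀ x : G, ∃ y : G, ∃ m : ℝ, ⁅Dv, i x⁆ = i y + m • z)
    (hDz : ∃ y : G, ∃ m : ℝ, ⁅Dv, z⁆ = i y + m • z)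
    -- the scalars a, b, c, d and the vector u
    (a b c d : ℝ) (u : G) (hu : αb u = 0) (hab : a + b = 1)
    (hcd : c + d = 0) (hc : c ≠ 0) (hδ : a * d - b * c ≠ 0)
    -- the contact form α = ᾱ + z* on E, with Reeb vector ξ, and the vector w
    (α : E →ₗ[ℝ] ℝ) (hαi : ∀ x : G, α (i x) = αb x) (hαz : α z = 1) (hαD : α Dv = 0)
    (ξ w : E) (hξ : ξ = i u + a • i ξb + b • z) (hw : w = c • i ξb + d • z)
    (hreeb : ∀ v : E, α ⁅ξ, v⁆ = 0)
    (hcontact : ∀ v : E, (∀ v' : E, α ⁅v, v'⁆ = 0) → ∃ r : ℝ, v = r • ξ)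
    -- Φ ∈ End(E): Φ = Φ̄ on Ker(ᾱ), Φ(w) = D, Φ(D) = −w, Φ(ξ) = 0
    (Φ : E →ₗ[ℝ] E)
    (hΦker : ∀ x : G, αb x = 0 → Φ (i x) = i (Φb x))
    (hΦw : Φ w = Dv) (hΦD : Φ Dv = -w) (hΦξ : Φ ξ = 0)
    (hradu : ∀ y : G, θ u y = 0)
    (hradξ : ∀ y : G, θ ξb y = 0)
    :
    (∀ x : G, αb x = 0 → Mtensor Φ (i x) ξ = 0) ↔
    (∀ x : G, αb x = 0 → i ⁅x, u⁆ + Φ (i ⁅Φb x, u⁆) = 0) := by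

  -- θ is skew
  have hθ_skew : ∀ x y : G, θ x y = -θ y x := by
    intro x y
    have h := hθ_alt (x + y)
    simp only [map_add, LinearMap.add_apply, hθ_alt x, hθ_alt y] at h
    linarith
  -- ξb ≠ 0
  have hξb_ne : ξb ≠ 0 := by
    intro h
    rw [h, map_zero] at hαbξb
    exact one_ne_zero hαbξb.symm
  -- Φb ξb = 0
  have hΦξb : Φb ξb = 0 := by
    have h1 : Φb (Φb ξb) = 0 := by
      rw [hΦb2, hαbξb, one_smul, neg_add_cancel]
    have h2 : Φb (Φb (Φb ξb)) = -Φb ξb + αb (Φb ξb) • ξb := hΦb2 (Φb ξb)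
    rw [h1, map_zero] at h2
    have h3 : Φb ξb = αb (Φb ξb) • ξb := by linear_combination (norm := module) h2
    have h4 : gb ξb (Φb ξb) = 0 := by
      rw [hgbdα, lie_self, map_zero, neg_zero]
    rw [h3, map_smul, smul_eq_mul] at h4
    rcases mul_eq_zero.mp h4 with h5 | h5
    · rw [h3, h5, zero_smul]
    · exact absurd h5 (ne_of_gt (hgb_pos ξb hξb_ne))
  -- αb ∘ Φb = 0
  have hαΦ : ∀ y : G, αb (Φb y) = 0 := by
    intro y
    have h1 : Φb (Φb (Φb y)) = -Φb y := by
      rw [hΦb2 y, map_add, map_neg, map_smul, hΦξb, smul_zero, add_zero]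
    have h2 : Φb (Φb (Φb y)) = -Φb y + αb (Φb y) • ξb := hΦb2 (Φb y)
    rw [h1] at h2
    have h3 : αb (Φb y) • ξb = 0 := by linear_combination (norm := module) -h2
    rcases smul_eq_zero.mp h3 with h | h
    · exact h
    · exact absurd h hξb_ne
  -- αb ⁅x, ξb⁆ = 0 for all x
  have hαbr : ∀ x : G, αb ⁅x, ξb⁆ = 0 := by
    intro x
    have := hgbdα x ξb
    rw [hΦξb, map_zero] at this
    linarith
  -- Φb ⁅Φb x, ξb⁆ = -⁅x, ξb⁆
  have hkey : ∀ x : G, Φb ⁅Φb x, ξb⁆ = -⁅x, ξb⁆ := by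
    intro x
    have hN := hNΦb x ξb
    rw [hαbr x, zero_smul] at hN
    unfold nijenhuis at hN
    rw [hΦξb, lie_zero, lie_zero, map_zero] at hN
    have h2 := hΦb2 ⁅x, ξb⁆
    rw [hαbr x, zero_smul, add_zero] at h2
    linear_combination (norm := module) h2 - hN
  -- bracket of i x with ξ
  have hbrξ : ∀ x : G, ⁅i x, ξ⁆ = i ⁅x, u⁆ + a • i ⁅x, ξb⁆ := by
    intro x
    have hθxu : θ x u = 0 := by rw [hθ_skew, hradu, neg_zero]
    have hθxξ : θ x ξb = 0 := by rw [hθ_skew, hradξ, neg_zero]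
    rw [hξ, lie_add, lie_add, lie_smul, lie_smul, hzcentral, smul_zero, add_zero,
      hbr, hbr, hθxu, hθxξ, zero_smul]
    module
  -- the main computation
  have hM : ∀ x : G, αb x = 0 → Mtensor Φ (i x) ξ = -(i ⁅x, u⁆ + Φ (i ⁅Φb x, u⁆)) := by
    intro x hx
    unfold Mtensor
    rw [hΦξ, lie_zero, lie_zero, map_zero, hΦker x hx, hbrξ x, hbrξ (Φb x),
      map_add, map_smul, hΦker _ (hαbr (Φb x)), hkey x, map_neg]
    module
  constructor
  · intro h x hx
    have hh := h x hx
    rw [hM x hx, neg_eq_zero] at hh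
    exact hh
  · intro h x hx
    rw [hM x hx, h x hx, neg_zero]
end

section
/- In the double-extension setting described in the context, assume ξ̄ ∈ Rad(θ). Then M(w,ξ) = 0 if and only if c·[ξ̄,u] + Φ(D(ξ)) = 0, where [ξ̄,u] is the bracket in 𝔤. -/
/-- Assuming `ξ̄ ∈ Rad(θ)`: `M(w,ξ) = 0` iff `c·[ξ̄,u] + Φ(D(ξ)) = 0`. -/
theorem M_w_xi_vanishes_iff
    {G E : Type*} [LieRing G] [LieAlgebra ℝ G] [LieRing E] [LieAlgebra ℝ E]
    -- the Sasakian structure (ḡ, ξ̄, ᾱ, Φ̄) on G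
    (gb : G →ₗ[ℝ] G →ₗ[ℝ] ℝ) (ξb : G) (αb : G →ₗ[ℝ] ℝ) (Φb : G →ₗ[ℝ] G)
    (hgb_symm : ∀ x y : G, gb x y = gb y x)
    (hgb_pos : ∀ x : G, x ≠ 0 → 0 < gb x x)
    (hαbξb : αb ξb = 1)
    (hΦb2 : ∀ x : G, Φb (Φb x) = -x + αb x • ξb)
    (hΦbg : ∀ x y : G, gb (Φb x) (Φb y) = gb x y - αb x * αb y)
    (hgbdα : ∀ x y : G, gb x (Φb y) = -(αb ⁅x, y⁆))
    (hNΦb : ∀ x y : G, nijenhuis Φb x y = αb ⁅x, y⁆ • ξb)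
    -- a 2-cocycle θ on G
    (θ : G →ₗ[ℝ] G →ₗ[ℝ] ℝ)
    (hθ_alt : ∀ x : G, θ x x = 0)
    (hθ_cocycle : ∀ x y w : G, θ ⁅x, y⁆ w + θ ⁅y, w⁆ x + θ ⁅w, x⁆ y = 0)
    -- E = 𝔤(θ,D) = ℝD ⋉ 𝔤_θ is the double extension, with central element z of 𝔤_θ
    -- and derivation D ∈ Der(𝔤_θ) realized as the element Dv (so D(v) = ⁅Dv, v⁆ on 𝔤_θ)
    (i : G →ₗ[ℝ] E) (z Dv : E)
    (hdecomp : ∀ v : E, ∃! t : G × ℝ × ℝ, v = i t.1 + t.2.1 • z + t.2.2 • Dv)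
    (hbr : ∀ x y : G, ⁅i x, i y⁆ = i ⁅x, y⁆ + θ x y • z)
    (hzcentral : ∀ x : G, ⁅i x, z⁆ = 0)
    (hDpres : ∀ x : G, ∃ y : G, ∃ m : ℝ, ⁅Dv, i x⁆ = i y + m • z)
    (hDz : ∃ y : G, ∃ m : ℝ, ⁅Dv, z⁆ = i y + m • z)
    -- the scalars a, b, c, d and the vector u
    (a b c d : ℝ) (u : G) (hu : αb u = 0) (hab : a + b = 1)
    (hcd : c + d = 0) (hc : c ≠ 0) (hδ : a * d - b * c ≠ 0)
    -- the contact form α = ᾱ + z* on E, with Reeb vector ξ, and the vector w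
    (α : E →ₗ[ℝ] ℝ) (hαi : ∀ x : G, α (i x) = αb x) (hαz : α z = 1) (hαD : α Dv = 0)
    (ξ w : E) (hξ : ξ = i u + a • i ξb + b • z) (hw : w = c • i ξb + d • z)
    (hreeb : ∀ v : E, α ⁅ξ, v⁆ = 0)
    (hcontact : ∀ v : E, (∀ v' : E, α ⁅v, v'⁆ = 0) → ∃ r : ℝ, v = r • ξ)
    -- Φ ∈ End(E): Φ = Φ̄ on Ker(ᾱ), Φ(w) = D, Φ(D) = −w, Φ(ξ) = 0
    (Φ : E →ₗ[ℝ] E)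
    (hΦker : ∀ x : G, αb x = 0 → Φ (i x) = i (Φb x))
    (hΦw : Φ w = Dv) (hΦD : Φ Dv = -w) (hΦξ : Φ ξ = 0)
    (hrad : ∀ y : G, θ ξb y = 0)
    :
    Mtensor Φ w ξ = 0 ↔ c • i ⁅ξb, u⁆ + Φ ⁅Dv, ξ⁆ = 0 := by
  have hz' : ∀ x : G, ⁅z, i x⁆ = 0 := fun x => by
    rw [← lie_skew, hzcentral, neg_zero]
  have h1 : ⁅w, ξ⁆ = c • i ⁅ξb, u⁆ := by
    rw [hw, hξ]
    simp [lie_add, add_lie, smul_lie, lie_smul, hbr, hzcentral, hrad, hz']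
  have h2 : Mtensor Φ w ξ = -(c • i ⁅ξb, u⁆ + Φ ⁅Dv, ξ⁆) := by
    simp only [Mtensor, hΦξ, hΦw, h1, lie_zero, map_zero, add_zero, sub_zero, neg_add]
    abel
  rw [h2, neg_eq_zero]
end

section
/- In the double-extension setting described in the context, assume ξ̄ ∈ Rad(θ). Then M(D,ξ) = 0 if and only if D(ξ) = c·Φ([ξ̄,u]), where [ξ̄,u] is the bracket in 𝔤. -/
/-- Assuming `ξ̄ ∈ Rad(θ)`: `M(D,ξ) = 0` iff `D(ξ) = c·Φ([ξ̄,u])`. -/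
theorem M_D_xi_vanishes_iff
    {G E : Type*} [LieRing G] [LieAlgebra ℝ G] [LieRing E] [LieAlgebra ℝ E]
    -- the Sasakian structure (ḡ, ξ̄, ᾱ, Φ̄) on G
    (gb : G →ₗ[ℝ] G →ₗ[ℝ] ℝ) (ξb : G) (αb : G →ₗ[ℝ] ℝ) (Φb : G →ₗ[ℝ] G)
    (hgb_symm : ∀ x y : G, gb x y = gb y x)
    (hgb_pos : ∀ x : G, x ≠ 0 → 0 < gb x x)
    (hαbξb : αb ξb = 1)
    (hΦb2 : ∀ x : G, Φb (Φb x) = -x + αb x • ξb)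
    (hΦbg : ∀ x y : G, gb (Φb x) (Φb y) = gb x y - αb x * αb y)
    (hgbdα : ∀ x y : G, gb x (Φb y) = -(αb ⁅x, y⁆))
    (hNΦb : ∀ x y : G, nijenhuis Φb x y = αb ⁅x, y⁆ • ξb)
    -- a 2-cocycle θ on G
    (θ : G →ₗ[ℝ] G →ₗ[ℝ] ℝ)
    (hθ_alt : ∀ x : G, θ x x = 0)
    (hθ_cocycle : ∀ x y w : G, θ ⁅x, y⁆ w + θ ⁅y, w⁆ x + θ ⁅w, x⁆ y = 0)
    -- E = 𝔤(θ,D) = ℝD ⋉ 𝔤_θ is the double extension, with central element z of 𝔤_θ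
    -- and derivation D ∈ Der(𝔤_θ) realized as the element Dv (so D(v) = ⁅Dv, v⁆ on 𝔤_θ)
    (i : G →ₗ[ℝ] E) (z Dv : E)
    (hdecomp : ∀ v : E, ∃! t : G × ℝ × ℝ, v = i t.1 + t.2.1 • z + t.2.2 • Dv)
    (hbr : ∀ x y : G, ⁅i x, i y⁆ = i ⁅x, y⁆ + θ x y • z)
    (hzcentral : ∀ x : G, ⁅i x, z⁆ = 0)
    (hDpres : ∀ x : G, ∃ y : G, ∃ m : ℝ, ⁅Dv, i x⁆ = i y + m • z)
    (hDz : ∃ y : G, ∃ m : ℝ, ⁅Dv, z⁆ = i y + m • z)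
    -- the scalars a, b, c, d and the vector u
    (a b c d : ℝ) (u : G) (hu : αb u = 0) (hab : a + b = 1)
    (hcd : c + d = 0) (hc : c ≠ 0) (hδ : a * d - b * c ≠ 0)
    -- the contact form α = ᾱ + z* on E, with Reeb vector ξ, and the vector w
    (α : E →ₗ[ℝ] ℝ) (hαi : ∀ x : G, α (i x) = αb x) (hαz : α z = 1) (hαD : α Dv = 0)
    (ξ w : E) (hξ : ξ = i u + a • i ξb + b • z) (hw : w = c • i ξb + d • z)
    (hreeb : ∀ v : E, α ⁅ξ, v⁆ = 0)
    (hcontact : ∀ v : E, (∀ v' : E, α ⁅v, v'⁆ = 0) → ∃ r : ℝ, v = r • ξ)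
    -- Φ ∈ End(E): Φ = Φ̄ on Ker(ᾱ), Φ(w) = D, Φ(D) = −w, Φ(ξ) = 0
    (Φ : E →ₗ[ℝ] E)
    (hΦker : ∀ x : G, αb x = 0 → Φ (i x) = i (Φb x))
    (hΦw : Φ w = Dv) (hΦD : Φ Dv = -w) (hΦξ : Φ ξ = 0)
    (hrad : ∀ y : G, θ ξb y = 0)
    :
    Mtensor Φ Dv ξ = 0 ↔ ⁅Dv, ξ⁆ = c • Φ (i ⁅ξb, u⁆) := by
  have hz' : ∀ x : G, ⁅z, i x⁆ = 0 := fun x => by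
    rw [← lie_skew, hzcentral, neg_zero]
  have hwξ : ⁅w, ξ⁆ = c • i ⁅ξb, u⁆ := by
    rw [hw, hξ]
    simp [add_lie, lie_add, smul_lie, lie_smul, hbr, hzcentral, hz', hθ_alt, hrad,
      lie_self]
  have key : Mtensor Φ Dv ξ = -⁅Dv, ξ⁆ + c • Φ (i ⁅ξb, u⁆) := by
    unfold Mtensor
    rw [hΦξ, hΦD]
    simp [neg_lie, hwξ]
  rw [key]
  constructor
  · intro h
    have h2 : c • Φ (i ⁅ξb, u⁆) - ⁅Dv, ξ⁆ = 0 := by rw [← h]; abel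
    exact (sub_eq_zero.mp h2).symm
  · intro h
    rw [h]; abel
end

section
/- Let (g, ξ, α, Φ) be a Sasakian structure on the real Lie algebra (𝔤,[·,·]), and let D ∈ Der(𝔤) satisfy α∘D = α and Φ(D(x)) = D(Φ(x)) for all x ∈ Ker(α). Let 𝔤(D) = ℝx_P ⋉ 𝔤 be the extension of 𝔤 by D, with [x_P, x] = D(x) for x ∈ 𝔤. Define J ∈ End(𝔤(D)) by J(x) = Φ(x) + α(x)·x_P for x ∈ 𝔤 and J(x_P) = −ξ, and define ᾱ ∈ 𝔤(D)* by ᾱ|_𝔤 = α and ᾱ(x_P) = 1. Then: (i) the Kirillov form B_ᾱ(U,V) = ᾱ([U,V]) is nondegenerate on 𝔤(D) (so (𝔤(D),ᾱ) is a Frobenius Lie algebra); (ii) J∘J = −Id; (iii) N_J = 0. Hence (𝔤(D), ᾱ, J) is a Frobenius–Kähler Lie algebra (with a suitable adapted metric). -/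
/-- Let `(g, ξ, α, Φ)` be a Sasakian structure on a real Lie algebra `G`, and let
`D ∈ Der(G)` satisfy `α∘D = α` and `Φ∘D = D∘Φ` on `Ker α`.  On the extension
`E = ℝx_P ⋉ G` by `D`, with `J(x) = Φ(x) + α(x)x_P` on `G`, `J(x_P) = −ξ`, and
`ᾱ|_G = α`, `ᾱ(x_P) = 1`, one has: the Kirillov form of `ᾱ` is nondegenerate,
`J∘J = −Id`, and `N_J = 0`; so `(E, ᾱ, J)` is a Frobenius–Kähler Lie algebra. -/
theorem sasakian_extension_by_derivation_is_frobenius_kahler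
    {G E : Type*} [LieRing G] [LieAlgebra ℝ G] [LieRing E] [LieAlgebra ℝ E]
    -- the Sasakian structure (g, ξ, α, Φ) on G
    (g : G →ₗ[ℝ] G →ₗ[ℝ] ℝ) (ξ : G) (α : G →ₗ[ℝ] ℝ) (Φ : G →ₗ[ℝ] G)
    (hg_symm : ∀ x y : G, g x y = g y x)
    (hg_pos : ∀ x : G, x ≠ 0 → 0 < g x x)
    (hαξ : α ξ = 1)
    (hΦ2 : ∀ x : G, Φ (Φ x) = -x + α x • ξ)
    (hΦg : ∀ x y : G, g (Φ x) (Φ y) = g x y - α x * α y)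
    (hgdα : ∀ x y : G, g x (Φ y) = -(α ⁅x, y⁆))
    (hNΦ : ∀ x y : G, nijenhuis Φ x y = α ⁅x, y⁆ • ξ)
    -- the derivation D
    (D : G →ₗ[ℝ] G)
    (hDer : ∀ x y : G, D ⁅x, y⁆ = ⁅D x, y⁆ + ⁅x, D y⁆)
    (hαD : ∀ x : G, α (D x) = α x)
    (hΦD : ∀ x : G, α x = 0 → Φ (D x) = D (Φ x))
    -- E = ℝx_P ⋉ G is the extension of G by D
    (i : G →ₗ[ℝ] E) (xP : E)
    (hdecomp : ∀ v : E, ∃! p : G × ℝ, v = i p.1 + p.2 • xP)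
    (hbrG : ∀ x y : G, ⁅i x, i y⁆ = i ⁅x, y⁆)
    (hbrxP : ∀ x : G, ⁅xP, i x⁆ = i (D x))
    -- J(x) = Φ(x) + α(x)·x_P on G, J(x_P) = −ξ
    (J : E →ₗ[ℝ] E)
    (hJ : ∀ x : G, J (i x) = i (Φ x) + α x • xP)
    (hJxP : J xP = -(i ξ))
    -- ᾱ = α + x_P*
    (αE : E →ₗ[ℝ] ℝ) (hαE : ∀ x : G, αE (i x) = α x) (hαExP : αE xP = 1) :
    -- (i) the Kirillov form B_ᾱ is nondegenerate
    (∀ U : E, (∀ V : E, αE ⁅U, V⁆ = 0) → U = 0) ∧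
    -- (ii)
    (∀ v : E, J (J v) = -v) ∧
    -- (iii)
    (∀ U V : E, nijenhuis J U V = 0) := by
  -- skew-symmetry of g(·, Φ·)
  have hskew : ∀ x y : G, g x (Φ y) = -(g (Φ x) y) := by
    intro x y
    rw [hgdα, hg_symm (Φ x) y, hgdα, ← lie_skew, map_neg, neg_neg]
  -- g(ξ, ·) = α
  have hgξ : ∀ y : G, g ξ y = α y := by
    intro y
    have hΦ2ξ : Φ (Φ ξ) = 0 := by
      rw [hΦ2, hαξ, one_smul, neg_add_cancel]
    have h1 : g (Φ ξ) (Φ y) = 0 := by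
      rw [hskew, hΦ2ξ]; simp
    have h2 := hΦg ξ y
    rw [h1, hαξ, one_mul] at h2
    linarith
  have hgxξ : ∀ x : G, g x ξ = α x := fun x => by rw [hg_symm, hgξ]
  -- Φ ξ = 0
  have hΦξ : Φ ξ = 0 := by
    by_contra h
    have hpos := hg_pos _ h
    have h2 := hΦg ξ ξ
    rw [hgξ, hαξ] at h2
    rw [h2] at hpos
    linarith
  -- α ∘ Φ = 0
  have hαΦ : ∀ x : G, α (Φ x) = 0 := by
    intro x
    rw [← hgξ, hskew, hΦξ]; simp
  -- α ⁅x, ξ⁆ = 0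
  have hαbr : ∀ x : G, α ⁅x, ξ⁆ = 0 := by
    intro x
    have h := hgdα x ξ
    rw [hΦξ, map_zero] at h
    linarith
  have hαbr' : ∀ y : G, α ⁅ξ, y⁆ = 0 := by
    intro y
    rw [← lie_skew, map_neg, hαbr, neg_zero]
  -- α ⁅Φ x, y⁆ = -α ⁅x, Φ y⁆
  have hαbrΦ : ∀ x y : G, α ⁅Φ x, y⁆ = -α ⁅x, Φ y⁆ := by
    intro x y
    have h1 := hgdα (Φ x) y
    rw [hΦg] at h1
    have h2 := hgdα x (Φ y)
    rw [hΦ2, map_add, map_neg, map_smul, hgxξ, smul_eq_mul] at h2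
    linarith
  -- the Nijenhuis condition for Φ, rewritten
  have hbrΦΦ : ∀ x y : G, ⁅Φ x, Φ y⁆ = Φ ⁅x, Φ y⁆ + Φ ⁅Φ x, y⁆ + ⁅x, y⁆ := by
    intro x y
    have h := hNΦ x y
    unfold nijenhuis at h
    linear_combination (norm := module) h - hΦ2 ⁅x, y⁆
  -- ⁅Φ x, ξ⁆ = Φ ⁅x, ξ⁆
  have hbrΦξ : ∀ x : G, ⁅Φ x, ξ⁆ = Φ ⁅x, ξ⁆ := by
    intro x
    have hA : ∀ z : G, Φ ⁅Φ z, ξ⁆ = -⁅z, ξ⁆ := by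
      intro z
      have h := hNΦ z ξ
      unfold nijenhuis at h
      have c1 : (⁅Φ z, Φ ξ⁆ : G) = 0 := by rw [hΦξ, lie_zero]
      have c2 : Φ ⁅z, Φ ξ⁆ = (0 : G) := by rw [hΦξ, lie_zero, map_zero]
      have c3 : α ⁅z, ξ⁆ • ξ = (0 : G) := by rw [hαbr, zero_smul]
      linear_combination (norm := module) -h + hΦ2 ⁅z, ξ⁆ + c1 - c2
    have h2 := congrArg Φ (hA x)
    rw [hΦ2, map_neg] at h2
    have c3 : α ⁅Φ x, ξ⁆ • ξ = (0 : G) := by rw [hαbr, zero_smul]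
    linear_combination (norm := module) -h2 + c3
  -- D (Φ y) in terms of Φ (D y)
  have hDΦ : ∀ y : G, D (Φ y) = Φ (D y) - α y • Φ (D ξ) := by
    intro y
    have h0 : α (y - α y • ξ) = 0 := by
      rw [map_sub, map_smul, hαξ, smul_eq_mul, mul_one, sub_self]
    have h := hΦD _ h0
    simp only [map_sub, map_smul, hΦξ, smul_zero, sub_zero] at h
    linear_combination (norm := module) -h
  -- ⁅i x, xP⁆
  have hixP : ∀ x : G, ⁅i x, xP⁆ = -(i (D x)) := by
    intro x
    rw [← lie_skew, hbrxP]
  -- part (ii)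
  have part2 : ∀ v : E, J (J v) = -v := by
    intro v
    obtain ⟨⟨x, t⟩, hv, -⟩ := hdecomp v
    rw [hv]
    simp only [map_add, map_smul, map_neg, hJ, hJxP, hΦ2, hαΦ, hΦξ, hαξ, map_zero,
      zero_smul, one_smul, smul_neg, neg_neg, add_zero, zero_add, smul_zero]
    module
  -- part (i)
  have part1 : ∀ U : E, (∀ V : E, αE ⁅U, V⁆ = 0) → U = 0 := by
    intro U hU
    obtain ⟨⟨x, t⟩, hUeq, -⟩ := hdecomp U
    dsimp only at hUeq
    have h1 : α x = 0 := by
      have h := hU xP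
      rw [hUeq] at h
      simp only [add_lie, smul_lie, lie_self, smul_zero, add_zero, hixP, map_neg, hαE] at h
      linarith [hαD x]
    have h2 : t = 0 := by
      have h := hU (i ξ)
      rw [hUeq] at h
      simp only [add_lie, smul_lie, hbrG, hbrxP, map_add, map_smul, hαE, hαbr, hαD, hαξ,
        smul_eq_mul, mul_one, zero_add] at h
      exact h
    have h3 : ∀ y : G, α ⁅x, y⁆ = 0 := by
      intro y
      have h := hU (i y)
      rw [hUeq, h2] at h
      simp only [add_lie, zero_smul, zero_lie, add_zero, hbrG, hαE] at h
      exact h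
    have hx : x = 0 := by
      by_contra hne
      have hpos := hg_pos x hne
      have h := hgdα x (Φ x)
      rw [hΦ2, map_add, map_neg, map_smul, hgxξ, h3, h1] at h
      simp only [smul_eq_mul, mul_zero, add_zero, neg_zero] at h
      linarith
    rw [hUeq, hx, h2]
    simp
  -- bilinearity and skew-symmetry of the Nijenhuis tensor
  have hN_add_l : ∀ a b c : E, nijenhuis J (a + b) c = nijenhuis J a c + nijenhuis J b c := by
    intro a b c
    simp only [nijenhuis, add_lie, lie_add, map_add]
    abel
  have hN_add_r : ∀ a b c : E, nijenhuis J a (b + c) = nijenhuis J a b + nijenhuis J a c := by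
    intro a b c
    simp only [nijenhuis, add_lie, lie_add, map_add]
    abel
  have hN_smul_l : ∀ (r : ℝ) (a c : E), nijenhuis J (r • a) c = r • nijenhuis J a c := by
    intro r a c
    simp only [nijenhuis, smul_lie, lie_smul, map_smul]
    module
  have hN_smul_r : ∀ (r : ℝ) (a c : E), nijenhuis J a (r • c) = r • nijenhuis J a c := by
    intro r a c
    simp only [nijenhuis, smul_lie, lie_smul, map_smul]
    module
  have hN_skew : ∀ a b : E, nijenhuis J a b = -nijenhuis J b a := by
    intro a b
    have e1 : ⁅a, b⁆ = -⁅b, a⁆ := (lie_skew a b).symm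
    have e2 : ⁅J a, J b⁆ = -⁅J b, J a⁆ := (lie_skew _ _).symm
    have e3 : ⁅a, J b⁆ = -⁅J b, a⁆ := (lie_skew _ _).symm
    have e4 : ⁅J a, b⁆ = -⁅b, J a⁆ := (lie_skew _ _).symm
    simp only [nijenhuis, e1, e2, e3, e4, map_neg]
    abel
  -- base cases
  have hbaseA : ∀ x y : G, nijenhuis J (i x) (i y) = 0 := by
    intro x y
    simp only [nijenhuis, hJ, hJxP, map_add, map_smul, map_neg, map_sub, lie_add, add_lie,
      lie_smul, smul_lie, lie_neg, neg_lie, lie_self, hbrG, hbrxP, hixP, hDΦ, hbrΦΦ, hbrΦξ,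
      hαbrΦ, hαΦ, hαD, hαξ, hΦ2, hΦξ, hαbr, hαbr', map_zero, zero_smul, smul_zero, add_zero,
      zero_add, one_smul, smul_neg, neg_neg, lie_zero, zero_lie]
    module
  have hbaseB : ∀ x : G, nijenhuis J (i x) xP = 0 := by
    intro x
    simp only [nijenhuis, hJ, hJxP, map_add, map_smul, map_neg, map_sub, lie_add, add_lie,
      lie_smul, smul_lie, lie_neg, neg_lie, lie_self, hbrG, hbrxP, hixP, hDΦ, hbrΦΦ, hbrΦξ,
      hαbrΦ, hαΦ, hαD, hαξ, hΦ2, hΦξ, hαbr, hαbr', map_zero, zero_smul, smul_zero, add_zero,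
      zero_add, one_smul, smul_neg, neg_neg, lie_zero, zero_lie]
    module
  have hbaseC : nijenhuis J xP xP = 0 := by
    simp only [nijenhuis, hJ, hJxP, map_add, map_smul, map_neg, lie_add, add_lie,
      lie_smul, smul_lie, lie_neg, neg_lie, lie_self, hbrG, hbrxP, hixP, hαΦ, hαD, hαξ,
      hΦ2, hΦξ, hαbr, map_zero, zero_smul, smul_zero, add_zero, zero_add, one_smul,
      smul_neg, neg_neg, lie_zero, zero_lie]
    module
  have hbaseD : ∀ y : G, nijenhuis J xP (i y) = 0 := by
    intro y
    rw [hN_skew, hbaseB, neg_zero]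
  refine ⟨part1, part2, ?_⟩
  intro U V
  obtain ⟨⟨x, s⟩, hUeq, -⟩ := hdecomp U
  obtain ⟨⟨y, t⟩, hVeq, -⟩ := hdecomp V
  dsimp only at hUeq hVeq
  rw [hUeq, hVeq]
  simp only [hN_add_l, hN_add_r, hN_smul_l, hN_smul_r, hbaseA, hbaseB, hbaseC, hbaseD,
    smul_zero, add_zero, zero_add]
end

section
/- Let (g,J,ω,α) be a Frobenius–Kähler structure on the real Lie algebra (𝔤,[·,·]) (so ω(x,y) = α([x,y]) = g(x,Jy)). Let 𝔤_ω = 𝔤 ⊕ ℝξ be the central extension of 𝔤 by the 2-cocycle ω, let ξ* ∈ 𝔤_ω* be the form with ξ*(ξ) = 1 and ξ* = 0 on 𝔤, and define Φ ∈ End(𝔤_ω) by Φ(x) = −J(x) for x ∈ 𝔤 and Φ(ξ) = 0 (so that (ξ, ξ*, Φ) is the Sasakian structure on 𝔤_ω obtained by central extension). Let D ∈ Der(𝔤_ω) satisfy ξ*∘D = ξ* (so D(𝔤) ⊆ 𝔤) and D∘J = J∘D on 𝔤. Form the double extension 𝔤(D,ω) = ℝx_P ⋉ 𝔤_ω, with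 [x_P, v] = D(v) for v ∈ 𝔤_ω, define ᾱ ∈ 𝔤(D,ω)* by ᾱ|_𝔤 = 0, ᾱ(ξ) = 1, ᾱ(x_P) = 1, and define J̄ ∈ End(𝔤(D,ω)) by J̄(v) = Φ(v) + ξ*(v)·x_P for v ∈ 𝔤_ω and J̄(x_P) = −ξ. Then the Kirillov form B_ᾱ(U,V) = ᾱ([U,V]) is nondegenerate on 𝔤(D,ω), J̄∘J̄ = −Id, and N_J̄ = 0; i.e., the double extension 𝔤(D,ω) is a Frobenius–Kähler Lie algebra. -/
/-- Let `(g,J,ω,α)` be a Frobenius–Kähler structure on a real Lie algebra `G`.  Form the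
central extension `G_ω = G ⊕ ℝξ` by the 2-cocycle `ω` and then the double extension
`E = G(D,ω) = ℝx_P ⋉ G_ω` by a derivation `D` of `G_ω` with `ξ*∘D = ξ*` and
`D∘J = J∘D` on `G`.  With `ᾱ(ξ) = ᾱ(x_P) = 1`, `ᾱ|_G = 0`, and
`J̄(x) = −J(x)` on `G`, `J̄(ξ) = x_P`, `J̄(x_P) = −ξ`, one has: the Kirillov form of `ᾱ`
is nondegenerate, `J̄∘J̄ = −Id`, and `N_J̄ = 0`; i.e. the double extension `E` is a
Frobenius–Kähler Lie algebra. -/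
theorem double_extension_frobenius_kahler_is_frobenius_kahler
    {G E : Type*} [LieRing G] [LieAlgebra ℝ G] [LieRing E] [LieAlgebra ℝ E]
    -- the Frobenius–Kähler structure (g, J, ω, α) on G
    (g : G →ₗ[ℝ] G →ₗ[ℝ] ℝ) (J : G →ₗ[ℝ] G) (ω : G →ₗ[ℝ] G →ₗ[ℝ] ℝ) (α : G →ₗ[ℝ] ℝ)
    (hg_symm : ∀ x y : G, g x y = g y x)
    (hg_pos : ∀ x : G, x ≠ 0 → 0 < g x x)
    (hJ2 : ∀ x : G, J (J x) = -x)
    (hgJ : ∀ x y : G, g (J x) y + g x (J y) = 0)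
    (hNJ : ∀ x y : G, nijenhuis J x y = 0)
    (hωg : ∀ x y : G, ω x y = g x (J y))
    (hωα : ∀ x y : G, ω x y = α ⁅x, y⁆)
    -- E = ℝx_P ⋉ G_ω is the double extension of G, with central element ξ of G_ω
    -- and derivation D = ad(x_P)|_{G_ω}
    (i : G →ₗ[ℝ] E) (ξ xP : E)
    (hdecomp : ∀ v : E, ∃! t : G × ℝ × ℝ, v = i t.1 + t.2.1 • ξ + t.2.2 • xP)
    (hbr : ∀ x y : G, ⁅i x, i y⁆ = i ⁅x, y⁆ + ω x y • ξ)
    (hξcentral : ∀ x : G, ⁅i x, ξ⁆ = 0)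
    -- the dual forms ξ* and x_P* on E
    (ξs : E →ₗ[ℝ] ℝ) (hξs : ∀ x : G, ξs (i x) = 0) (hξsξ : ξs ξ = 1) (hξsxP : ξs xP = 0)
    (xPs : E →ₗ[ℝ] ℝ) (hxPs : ∀ x : G, xPs (i x) = 0) (hxPsξ : xPs ξ = 0)
    (hxPsxP : xPs xP = 1)
    -- D = ad(x_P) preserves G_ω and satisfies ξ*∘D = ξ* (hence D(G) ⊆ G)
    (hDpresG : ∀ x : G, xPs ⁅xP, i x⁆ = 0)
    (hDpresξ : xPs ⁅xP, ξ⁆ = 0)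
    (hξsDG : ∀ x : G, ξs ⁅xP, i x⁆ = 0)
    (hξsDξ : ξs ⁅xP, ξ⁆ = 1)
    -- D∘J = J∘D on G
    (hDJ : ∀ x y : G, ⁅xP, i x⁆ = i y → ⁅xP, i (J x)⁆ = i (J y))
    -- ᾱ with ᾱ|_G = 0, ᾱ(ξ) = 1, ᾱ(x_P) = 1
    (αE : E →ₗ[ℝ] ℝ) (hαEG : ∀ x : G, αE (i x) = 0) (hαEξ : αE ξ = 1) (hαExP : αE xP = 1)
    -- J̄(v) = Φ(v) + ξ*(v)·x_P on G_ω (where Φ = −J on G, Φ(ξ) = 0), J̄(x_P) = −ξ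
    (Jb : E →ₗ[ℝ] E)
    (hJbG : ∀ x : G, Jb (i x) = -(i (J x)))
    (hJbξ : Jb ξ = xP) (hJbxP : Jb xP = -ξ) :
    -- the Kirillov form B_ᾱ is nondegenerate on E
    (∀ U : E, (∀ V : E, αE ⁅U, V⁆ = 0) → U = 0) ∧
    -- J̄ is a complex structure
    (∀ v : E, Jb (Jb v) = -v) ∧
    (∀ U V : E, nijenhuis Jb U V = 0) := by
  classical
  -- ω is skew
  have hωskew : ∀ x y : G, ω x y = - ω y x := by
    intro x y
    rw [hωα, hωα, ← lie_skew, map_neg]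
  -- ω is nondegenerate in the first slot
  have hωnd : ∀ x : G, (∀ y : G, ω x y = 0) → x = 0 := by
    intro x hx
    by_contra h
    have h1 := hg_pos x h
    have h2 := hx (-(J x))
    rw [hωg, map_neg, hJ2, neg_neg] at h2
    linarith
  -- decomposition of elements of E
  have hGpart : ∀ v : E, ∃ x : G, v = i x + ξs v • ξ + xPs v • xP := by
    intro v
    obtain ⟨t, ht, -⟩ := hdecomp v
    refine ⟨t.1, ?_⟩
    have h1 : ξs v = t.2.1 := by
      rw [ht]; simp [hξs, hξsξ, hξsxP]
    have h2 : xPs v = t.2.2 := by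
      rw [ht]; simp [hxPs, hxPsξ, hxPsxP]
    rw [h1, h2]; exact ht
  -- i is injective
  have hInj : ∀ x y : G, i x = i y → x = y := by
    intro x y hxy
    obtain ⟨t, ht, hu⟩ := hdecomp (i x)
    have h1 := hu (x, 0, 0) (by simp)
    have h2 := hu (y, 0, 0) (by simp [← hxy])
    have := h1.trans h2.symm
    exact congrArg Prod.fst this
  -- D maps G into G
  have hD : ∀ x : G, ∃ y : G, ⁅xP, i x⁆ = i y := by
    intro x
    obtain ⟨y, hy⟩ := hGpart ⁅xP, i x⁆
    rw [hξsDG, hDpresG] at hy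
    exact ⟨y, by simpa using hy⟩
  set Dm : G → G := fun x => Classical.choose (hD x) with hDm
  have hDspec : ∀ x : G, ⁅xP, i x⁆ = i (Dm x) := fun x => Classical.choose_spec (hD x)
  -- ⁅xP, ξ⁆ = ξ
  have hxPξ : ⁅xP, ξ⁆ = ξ := by
    obtain ⟨c, hc⟩ := hGpart ⁅xP, ξ⁆
    rw [hξsDξ, hDpresξ] at hc
    simp only [one_smul, zero_smul, add_zero] at hc
    have hc0 : c = 0 := by
      apply hωnd
      intro y
      rw [hωskew]
      have hj : ⁅xP, ⁅i y, ξ⁆⁆ = ⁅⁅xP, i y⁆, ξ⁆ + ⁅i y, ⁅xP, ξ⁆⁆ := leibniz_lie xP (i y) ξ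
      rw [hξcentral, lie_zero, hDspec, hξcentral, hc, lie_add, hbr, hξcentral, add_zero] at hj
      have := congrArg ξs hj.symm
      simp only [map_add, map_smul, hξs, hξsξ, map_zero, smul_eq_mul, mul_one, zero_add] at this
      simpa using this
    rw [hc0, map_zero, zero_add] at hc
    exact hc
  -- D commutes with J
  have hJD : ∀ x : G, ⁅xP, i (J x)⁆ = i (J (Dm x)) := fun x => hDJ x (Dm x) (hDspec x)
  have hDmJ : ∀ x : G, Dm (J x) = J (Dm x) := by
    intro x
    apply hInj
    rw [← hDspec, hJD]
  -- auxiliary bracket forms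
  have hξI : ∀ x : G, ⁅ξ, i x⁆ = 0 := by
    intro x; rw [← lie_skew, hξcentral, neg_zero]
  have hIxP : ∀ x : G, ⁅i x, xP⁆ = -(i (Dm x)) := by
    intro x; rw [← lie_skew, hDspec]
  have hξxP : ⁅ξ, xP⁆ = -ξ := by
    rw [← lie_skew, hxPξ]
  -- ω identities
  have hω1 : ∀ x y : G, ω (J x) (J y) = ω x y := by
    intro x y
    rw [hωg, hωg, hJ2, map_neg]
    have := hgJ x y
    linarith
  have hω2 : ∀ x y : G, ω x (J y) = - ω (J x) y := by
    intro x y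
    rw [hωg, hωg, hJ2, map_neg]
    have h := hgJ x (J y)
    rw [hJ2, map_neg] at h
    linarith
  -- Nijenhuis-derived bracket relation on G
  have hJJ : ∀ x y : G, ⁅J x, J y⁆ = ⁅x, y⁆ + J ⁅x, J y⁆ + J ⁅J x, y⁆ := by
    intro x y
    have hN := hNJ x y
    unfold nijenhuis at hN
    rw [hJ2] at hN
    have h2 : ⁅J x, J y⁆ - (⁅x, y⁆ + J ⁅x, J y⁆ + J ⁅J x, y⁆) = 0 := by
      rw [← hN]; abel
    exact sub_eq_zero.mp h2
  refine ⟨?_, ?_, ?_⟩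
  · -- nondegeneracy
    intro U hU
    obtain ⟨x, hx⟩ := hGpart U
    have hb : xPs U = 0 := by
      have h := hU ξ
      rw [hx] at h
      simp only [add_lie, smul_lie, hξcentral, lie_self, hxPξ, smul_zero, zero_add,
        map_smul, hαEξ, smul_eq_mul, mul_one, add_zero, map_add, map_zero] at h
      exact h
    have ha : ξs U = 0 := by
      have h := hU xP
      rw [hx] at h
      simp only [add_lie, smul_lie, hIxP, hξxP, lie_self, smul_zero, add_zero,
        map_add, map_neg, map_smul, hαEG, hαEξ, smul_eq_mul, mul_one, neg_zero, zero_add] at h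
      linarith
    rw [ha, hb] at hx
    simp only [zero_smul, add_zero] at hx
    have hx0 : x = 0 := by
      apply hωnd
      intro y
      have h := hU (i y)
      rw [hx, hbr] at h
      simp only [map_add, map_smul, hαEG, hαEξ, smul_eq_mul, mul_one, zero_add] at h
      exact h
    rw [hx, hx0, map_zero]
  · -- Jb ∘ Jb = -id
    intro v
    obtain ⟨x, hv⟩ := hGpart v
    rw [hv]
    simp only [map_add, map_smul, hJbG, hJbξ, hJbxP, map_neg, hJ2, neg_neg, smul_neg]
    abel
  · -- Nijenhuis tensor of Jb vanishes
    intro U V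
    -- base cases
    have Nself : ∀ v : E, nijenhuis Jb v v = 0 := by
      intro v
      unfold nijenhuis
      rw [lie_self, map_zero, map_zero, lie_self, ← lie_skew v (Jb v), map_neg]
      abel
    have Nanti : ∀ u v : E, nijenhuis Jb u v = - nijenhuis Jb v u := by
      intro u v
      unfold nijenhuis
      rw [show ⁅v, u⁆ = -⁅u, v⁆ from (lie_skew v u).symm,
        show ⁅Jb v, Jb u⁆ = -⁅Jb u, Jb v⁆ from (lie_skew (Jb v) (Jb u)).symm,
        show ⁅v, Jb u⁆ = -⁅Jb u, v⁆ from (lie_skew v (Jb u)).symm,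
        show ⁅Jb v, u⁆ = -⁅u, Jb v⁆ from (lie_skew (Jb v) u).symm]
      simp only [map_neg]
      abel
    have Nii : ∀ x y : G, nijenhuis Jb (i x) (i y) = 0 := by
      intro x y
      unfold nijenhuis
      simp only [hbr, hJbG, hJbξ, hJbxP, map_add, map_smul, map_neg, lie_neg, neg_lie,
        neg_neg, smul_neg]
      rw [hJ2, hJJ x y, hω1, hω2 x y]
      simp only [map_add, map_neg]
      module
    have Niξ : ∀ x : G, nijenhuis Jb (i x) ξ = 0 := by
      intro x
      unfold nijenhuis
      simp only [hξcentral, hξI, hIxP, hJbG, hJbξ, lie_neg, neg_lie, map_zero, map_neg,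
        neg_neg, hDmJ]
      abel
    have NixP : ∀ x : G, nijenhuis Jb (i x) xP = 0 := by
      intro x
      unfold nijenhuis
      simp only [hJbxP, hJbG, hJbξ, hIxP, hξcentral, hξI, lie_neg, neg_lie, map_zero,
        map_neg, neg_neg, hDmJ, hJ2]
      abel
    have NξxP : nijenhuis Jb ξ xP = 0 := by
      unfold nijenhuis
      simp only [hξxP, hxPξ, hJbξ, hJbxP, lie_neg, neg_lie, lie_self, map_zero, map_neg,
        neg_neg]
      abel
    have Nξi : ∀ y : G, nijenhuis Jb ξ (i y) = 0 := by
      intro y; rw [Nanti, Niξ, neg_zero]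
    have NxPi : ∀ y : G, nijenhuis Jb xP (i y) = 0 := by
      intro y; rw [Nanti, NixP, neg_zero]
    have NxPξ : nijenhuis Jb xP ξ = 0 := by
      rw [Nanti, NξxP, neg_zero]
    -- bilinearity
    have NL : ∀ u₁ u₂ v : E, nijenhuis Jb (u₁ + u₂) v
        = nijenhuis Jb u₁ v + nijenhuis Jb u₂ v := by
      intro u₁ u₂ v
      unfold nijenhuis
      simp only [add_lie, lie_add, map_add]
      abel
    have NLs : ∀ (a : ℝ) (u v : E), nijenhuis Jb (a • u) v = a • nijenhuis Jb u v := by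
      intro a u v
      unfold nijenhuis
      simp only [smul_lie, lie_smul, map_smul]
      module
    have NR : ∀ u v₁ v₂ : E, nijenhuis Jb u (v₁ + v₂)
        = nijenhuis Jb u v₁ + nijenhuis Jb u v₂ := by
      intro u v₁ v₂
      unfold nijenhuis
      simp only [add_lie, lie_add, map_add]
      abel
    have NRs : ∀ (a : ℝ) (u v : E), nijenhuis Jb u (a • v) = a • nijenhuis Jb u v := by
      intro a u v
      unfold nijenhuis
      simp only [smul_lie, lie_smul, map_smul]
      module
    obtain ⟨x, hU⟩ := hGpart U
    obtain ⟨y, hV⟩ := hGpart V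
    rw [hU, hV]
    simp only [NL, NLs, NR, NRs, Nii, Niξ, NixP, Nξi, Nself, NξxP, NxPi, NxPξ,
      smul_zero, add_zero, zero_add]
end

section
/- Let (g,J,ω,α) be a Frobenius–Kähler structure on a real Lie algebra (𝔤,[·,·]) with principal element x_P (i.e. α([x_P,x]) = α(x) for all x ∈ 𝔤). Let 𝔥 ⊂ 𝔤 be an ideal with 𝔤 = ℝx_P ⊕ 𝔥 as vector spaces, set ᾱ := α|_𝔥, and assume ᾱ is a contact form on 𝔥 with Reeb vector ξ ∈ 𝔥 (ᾱ(ξ) = 1, dᾱ(ξ,·) = 0 on 𝔥, and dᾱ nondegenerate on Ker(ᾱ)). Assume J(Ker(ᾱ)) ⊆ Ker(ᾱ), and define Φ ∈ End(𝔥) by Φ(ξ) = 0 and Φ(x) = J(x) for x ∈ Ker(ᾱ). Then (ξ, ᾱ, Φ) is a Sasakian structure on 𝔥 (equivalently, since Φ∘Φ = −Id_𝔥 + ᾱ⊗ξ holds by construction, N_Φ = −dᾱ⊗ξ holds) if and only if ad(ξ)∘Φ = Φ∘ad(ξ) on 𝔥. -/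
/-- Frobenius–Kähler `G` with principal element `x_P`; `H` an ideal with `G = ℝx_P ⊕ H` on which `ᾱ` (the restriction of `α`) is a contact form with Reeb vector `ξ`.  With `Φ(ξ) = 0`, `Φ = J` on `Ker ᾱ`, the triple `(ξ, ᾱ, Φ)` is a Sasakian structure on `H` iff `ad(ξ)∘Φ = Φ∘ad(ξ)` on `H`. -/
theorem contact_ideal_sasakian_iff_ad_xi_commutes
    {G : Type*} [LieRing G] [LieAlgebra ℝ G]
    -- the Frobenius–Kähler structure (g, J, ω, α) on G
    (g : G →ₗ[ℝ] G →ₗ[ℝ] ℝ) (J : G →ₗ[ℝ] G) (ω : G →ₗ[ℝ] G →ₗ[ℝ] ℝ) (α : G →ₗ[ℝ] ℝ)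
    (hg_symm : ∀ x y : G, g x y = g y x)
    (hg_pos : ∀ x : G, x ≠ 0 → 0 < g x x)
    (hJ2 : ∀ x : G, J (J x) = -x)
    (hgJ : ∀ x y : G, g (J x) y + g x (J y) = 0)
    (hNJ : ∀ x y : G, nijenhuis J x y = 0)
    (hωg : ∀ x y : G, ω x y = g x (J y))
    (hωα : ∀ x y : G, ω x y = α ⁅x, y⁆)
    -- the principal element x_P
    (xP : G) (hxP : ∀ x : G, α ⁅xP, x⁆ = α x)
    -- the ideal H with G = ℝx_P ⊕ H
    (H : Submodule ℝ G)
    (hHideal : ∀ x : G, ∀ y ∈ H, ⁅x, y⁆ ∈ H)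
    (hHcompl : ∀ v : G, ∃! p : ℝ × H, v = p.1 • xP + (p.2 : G))
    -- ᾱ = α|_H is a contact form on H with Reeb vector ξ
    (ξ : G) (hξH : ξ ∈ H) (hαξ : α ξ = 1)
    (hreeb : ∀ x ∈ H, α ⁅ξ, x⁆ = 0)
    (hnondeg : ∀ x ∈ H, α x = 0 → (∀ y ∈ H, α y = 0 → α ⁅x, y⁆ = 0) → x = 0)
    -- J preserves Ker(ᾱ) ⊂ H
    (hJK : ∀ x ∈ H, α x = 0 → (J x ∈ H ∧ α (J x) = 0))
    -- Φ : Φ(ξ) = 0 and Φ = J on Ker(ᾱ)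
    (Φ : G →ₗ[ℝ] G) (hΦξ : Φ ξ = 0) (hΦker : ∀ x ∈ H, α x = 0 → Φ x = J x) :
    -- (ξ, ᾱ, Φ) is Sasakian on H (N_Φ = −dᾱ⊗ξ) iff ad(ξ)∘Φ = Φ∘ad(ξ) on H
    (∀ x ∈ H, ∀ y ∈ H, nijenhuis Φ x y = α ⁅x, y⁆ • ξ) ↔
    (∀ x ∈ H, ⁅ξ, Φ x⁆ = Φ ⁅ξ, x⁆) := by
  -- basic decomposition facts
  have hK : ∀ z : G, z ∈ H → (z - α z • ξ) ∈ H ∧ α (z - α z • ξ) = 0 := by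
    intro z hz
    refine ⟨H.sub_mem hz (H.smul_mem _ hξH), ?_⟩
    simp [hαξ]
  have hΦH : ∀ z : G, z ∈ H → Φ z = J (z - α z • ξ) := by
    intro z hz
    have h := hΦker _ (hK z hz).1 (hK z hz).2
    rw [map_sub, map_smul, hΦξ, smul_zero, sub_zero] at h
    exact h
  have hΦ2 : ∀ z : G, z ∈ H → Φ (Φ z) = -z + α z • ξ := by
    intro z hz
    obtain ⟨hJm, hJa⟩ := hJK _ (hK z hz).1 (hK z hz).2
    rw [hΦH z hz, hΦker _ hJm hJa, hJ2, neg_sub, sub_eq_neg_add]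
  constructor
  · -- Sasakian → ad(ξ) commutes with Φ
    intro hS x hx
    have hxm : (x - α x • ξ) ∈ H := (hK x hx).1
    have hxa : α (x - α x • ξ) = 0 := (hK x hx).2
    obtain ⟨hJm, hJa⟩ := hJK _ hxm hxa
    have hbm : ⁅ξ, x - α x • ξ⁆ ∈ H := hHideal ξ _ hxm
    have hbα : α ⁅ξ, x - α x • ξ⁆ = 0 := hreeb _ hxm
    have hN := hS ξ hξH _ hxm
    rw [hbα, zero_smul] at hN
    have hΦx₀ : Φ (x - α x • ξ) = J (x - α x • ξ) := hΦker _ hxm hxa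
    have h1 : Φ (Φ ⁅ξ, x - α x • ξ⁆) = -⁅ξ, x - α x • ξ⁆ := by
      rw [hΦ2 _ hbm, hbα, zero_smul, add_zero]
    have h2 : Φ ⁅ξ, J (x - α x • ξ)⁆ = J ⁅ξ, J (x - α x • ξ)⁆ :=
      hΦker _ (hHideal ξ _ hJm) (hreeb _ hJm)
    simp only [nijenhuis, hΦξ, zero_lie, lie_zero, map_zero, hΦx₀, h2, h1,
      add_zero, sub_zero] at hN
    -- hN : -⁅ξ, x₀⁆ - J ⁅ξ, J x₀⁆ = 0
    have hJeq : J ⁅ξ, J (x - α x • ξ)⁆ = -⁅ξ, x - α x • ξ⁆ := by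
      linear_combination (norm := module) - hN
    have hcomm : ⁅ξ, J (x - α x • ξ)⁆ = J ⁅ξ, x - α x • ξ⁆ := by
      have h := congrArg J hJeq
      rw [hJ2, map_neg] at h
      exact neg_injective h
    have hlx : ⁅ξ, x - α x • ξ⁆ = ⁅ξ, x⁆ := by
      rw [lie_sub, lie_smul, lie_self, smul_zero, sub_zero]
    rw [hΦH x hx, hcomm, hlx, hΦker _ (hHideal ξ x hx) (hreeb x hx)]
  · -- ad(ξ) commutes with Φ → Sasakian
    intro hC x hx y hy
    have N0 : ∀ z, z ∈ H → nijenhuis Φ ξ z = 0 := by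
      intro z hz
      simp only [nijenhuis, hΦξ, zero_lie, lie_zero, map_zero, add_zero, sub_zero]
      rw [hC z hz, sub_self]
    have hanti : ∀ a b : G, nijenhuis Φ a b = - nijenhuis Φ b a := by
      intro a b
      simp only [nijenhuis]
      rw [← lie_skew b a, ← lie_skew (Φ b) (Φ a), ← lie_skew b (Φ a), ← lie_skew (Φ b) a]
      simp only [map_neg]
      abel
    have Nsub : ∀ (a : ℝ) (u v w : G),
        nijenhuis Φ (u - a • v) w = nijenhuis Φ u w - a • nijenhuis Φ v w := by
      intro a u v w
      simp only [nijenhuis, map_sub, map_smul, sub_lie, lie_sub, smul_lie, lie_smul,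
        smul_sub]
      module
    have hxm : (x - α x • ξ) ∈ H := (hK x hx).1
    have hxa : α (x - α x • ξ) = 0 := (hK x hx).2
    have hym : (y - α y • ξ) ∈ H := (hK y hy).1
    have hya : α (y - α y • ξ) = 0 := (hK y hy).2
    obtain ⟨hJxm, hJxa⟩ := hJK _ hxm hxa
    obtain ⟨hJym, hJya⟩ := hJK _ hym hya
    have hxξ : α ⁅x, ξ⁆ = 0 := by
      rw [← lie_skew x ξ, map_neg, hreeb x hx, neg_zero]
    -- reduce to the kernel part
    have e1 : nijenhuis Φ (x - α x • ξ) y = nijenhuis Φ x y := by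
      rw [Nsub, N0 y hy, smul_zero, sub_zero]
    have e2 : nijenhuis Φ (y - α y • ξ) (x - α x • ξ) = nijenhuis Φ y (x - α x • ξ) := by
      rw [Nsub, N0 _ hxm, smul_zero, sub_zero]
    have step1 : nijenhuis Φ x y = nijenhuis Φ (x - α x • ξ) (y - α y • ξ) := by
      calc nijenhuis Φ x y = nijenhuis Φ (x - α x • ξ) y := e1.symm
        _ = - nijenhuis Φ y (x - α x • ξ) := hanti _ _
        _ = - nijenhuis Φ (y - α y • ξ) (x - α x • ξ) := by rw [e2]
        _ = nijenhuis Φ (x - α x • ξ) (y - α y • ξ) := (hanti _ _).symm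
    have hαxy : α ⁅x - α x • ξ, y - α y • ξ⁆ = α ⁅x, y⁆ := by
      simp [sub_lie, lie_sub, smul_lie, lie_smul, lie_self, hreeb y hy, hxξ]
    -- the Kähler computation on the kernel
    have hΦx₀ : Φ (x - α x • ξ) = J (x - α x • ξ) := hΦker _ hxm hxa
    have hΦy₀ : Φ (y - α y • ξ) = J (y - α y • ξ) := hΦker _ hym hya
    have h1 : Φ (Φ ⁅x - α x • ξ, y - α y • ξ⁆) =
        -⁅x - α x • ξ, y - α y • ξ⁆ + α ⁅x - α x • ξ, y - α y • ξ⁆ • ξ :=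
      hΦ2 _ (hHideal _ _ hym)
    have h2 : Φ ⁅x - α x • ξ, J (y - α y • ξ)⁆ =
        J ⁅x - α x • ξ, J (y - α y • ξ)⁆ - α ⁅x - α x • ξ, J (y - α y • ξ)⁆ • J ξ := by
      rw [hΦH _ (hHideal _ _ hJym), map_sub, map_smul]
    have h3 : Φ ⁅J (x - α x • ξ), y - α y • ξ⁆ =
        J ⁅J (x - α x • ξ), y - α y • ξ⁆ - α ⁅J (x - α x • ξ), y - α y • ξ⁆ • J ξ := by
      rw [hΦH _ (hHideal _ _ hym), map_sub, map_smul]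
    have ha1 : α ⁅x - α x • ξ, J (y - α y • ξ)⁆ = -(g (x - α x • ξ) (y - α y • ξ)) := by
      rw [← hωα, hωg, hJ2, map_neg]
    have ha2 : α ⁅J (x - α x • ξ), y - α y • ξ⁆ = g (x - α x • ξ) (y - α y • ξ) := by
      have h := hgJ (x - α x • ξ) (J (y - α y • ξ))
      rw [hJ2, map_neg] at h
      rw [← hωα, hωg]
      linarith
    have hNJ' := hNJ (x - α x • ξ) (y - α y • ξ)
    simp only [nijenhuis] at hNJ'
    rw [hJ2] at hNJ'
    rw [step1, ← hαxy]
    simp only [nijenhuis, hΦx₀, hΦy₀]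
    rw [h1, h2, h3, ha1, ha2]
    linear_combination (norm := module) hNJ'
end

section
/- Let (g,J,ω,α) be a Frobenius–Kähler structure on a real Lie algebra (𝔤,[·,·]) with principal element x_P (α([x_P,x]) = α(x) for all x). Let 𝔥 ⊂ 𝔤 be an ideal with 𝔤 = ℝx_P ⊕ 𝔥, set ᾱ := α|_𝔥, and assume ᾱ is a contact form on 𝔥 with Reeb vector ξ ∈ 𝔥. Assume J(Ker(ᾱ)) ⊆ Ker(ᾱ), J(ξ) = x_P, and [x_P, ξ] = ξ, and define Φ ∈ End(𝔥) by Φ(ξ) = 0 and Φ(x) = J(x) for x ∈ Ker(ᾱ). Then (ξ, ᾱ, Φ) is a Sasakian structure on 𝔥 (i.e. N_Φ = −dᾱ⊗ξ, the identity Φ∘Φ = −Id_𝔥 + ᾱ⊗ξ holding by construction) if and only if ad(x_P)∘Φ = Φ∘ad(x_P) on Ker(ᾱ). -/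
/-- Frobenius–Kähler `G` with principal element `x_P`; `H` an ideal with `G = ℝx_P ⊕ H` on which `ᾱ` (the restriction of `α`) is a contact form with Reeb vector `ξ`; assume `J(ξ) = x_P` and `[x_P,ξ] = ξ`.  With `Φ(ξ) = 0`, `Φ = J` on `Ker ᾱ`, the triple `(ξ, ᾱ, Φ)` is a Sasakian structure on `H` iff `ad(x_P)∘Φ = Φ∘ad(x_P)` on `Ker ᾱ`. -/
theorem contact_ideal_sasakian_iff_ad_xP_commutes
    {G : Type*} [LieRing G] [LieAlgebra ℝ G]
    -- the Frobenius–Kähler structure (g, J, ω, α) on G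
    (g : G →ₗ[ℝ] G →ₗ[ℝ] ℝ) (J : G →ₗ[ℝ] G) (ω : G →ₗ[ℝ] G →ₗ[ℝ] ℝ) (α : G →ₗ[ℝ] ℝ)
    (hg_symm : ∀ x y : G, g x y = g y x)
    (hg_pos : ∀ x : G, x ≠ 0 → 0 < g x x)
    (hJ2 : ∀ x : G, J (J x) = -x)
    (hgJ : ∀ x y : G, g (J x) y + g x (J y) = 0)
    (hNJ : ∀ x y : G, nijenhuis J x y = 0)
    (hωg : ∀ x y : G, ω x y = g x (J y))
    (hωα : ∀ x y : G, ω x y = α ⁅x, y⁆)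
    -- the principal element x_P
    (xP : G) (hxP : ∀ x : G, α ⁅xP, x⁆ = α x)
    -- the ideal H with G = ℝx_P ⊕ H
    (H : Submodule ℝ G)
    (hHideal : ∀ x : G, ∀ y ∈ H, ⁅x, y⁆ ∈ H)
    (hHcompl : ∀ v : G, ∃! p : ℝ × H, v = p.1 • xP + (p.2 : G))
    -- ᾱ = α|_H is a contact form on H with Reeb vector ξ
    (ξ : G) (hξH : ξ ∈ H) (hαξ : α ξ = 1)
    (hreeb : ∀ x ∈ H, α ⁅ξ, x⁆ = 0)
    (hnondeg : ∀ x ∈ H, α x = 0 → (∀ y ∈ H, α y = 0 → α ⁅x, y⁆ = 0) → x = 0)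
    -- J preserves Ker(ᾱ) ⊂ H, J(ξ) = x_P, and [x_P, ξ] = ξ
    (hJK : ∀ x ∈ H, α x = 0 → (J x ∈ H ∧ α (J x) = 0))
    (hJξ : J ξ = xP) (hbrPξ : ⁅xP, ξ⁆ = ξ)
    -- Φ : Φ(ξ) = 0 and Φ = J on Ker(ᾱ)
    (Φ : G →ₗ[ℝ] G) (hΦξ : Φ ξ = 0) (hΦker : ∀ x ∈ H, α x = 0 → Φ x = J x) :
    -- (ξ, ᾱ, Φ) is Sasakian on H (N_Φ = −dᾱ⊗ξ) iff ad(x_P)∘Φ = Φ∘ad(x_P) on Ker(ᾱ)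
    (∀ x ∈ H, ∀ y ∈ H, nijenhuis Φ x y = α ⁅x, y⁆ • ξ) ↔
    (∀ x ∈ H, α x = 0 → ⁅xP, Φ x⁆ = Φ ⁅xP, x⁆) := by
  -- α(xP) = 0
  have hαxP : α xP = 0 := by
    have h := hxP xP
    simp only [lie_self, map_zero] at h
    linarith
  -- J xP = -ξ
  have hJxP : J xP = -ξ := by rw [← hJξ, hJ2]
  -- the kernel part of an element of H
  have hKmem : ∀ x ∈ H, (x - α x • ξ ∈ H ∧ α (x - α x • ξ) = 0) := by
    intro x hx
    refine ⟨H.sub_mem hx (H.smul_mem _ hξH), ?_⟩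
    simp [hαξ]
  -- α ∘ J = 0 on H
  have hαJ : ∀ x ∈ H, α (J x) = 0 := by
    intro x hx
    obtain ⟨hk, hk0⟩ := hKmem x hx
    have h := (hJK _ hk hk0).2
    rw [map_sub, map_smul, hJξ, map_sub, map_smul, hαxP] at h
    simpa using h
  -- Φ = J - α ⊗ xP on H
  have hΦeq : ∀ x ∈ H, Φ x = J x - α x • xP := by
    intro x hx
    obtain ⟨hk, hk0⟩ := hKmem x hx
    have h := hΦker _ hk hk0
    rw [map_sub, map_smul, hΦξ, map_sub, map_smul, hJξ] at h
    simpa [sub_eq_iff_eq_add] using h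
  -- Φ maps H to Ker ᾱ
  have hΦH : ∀ x ∈ H, Φ x ∈ H ∧ α (Φ x) = 0 := by
    intro x hx
    obtain ⟨hk, hk0⟩ := hKmem x hx
    obtain ⟨h1, h2⟩ := hJK _ hk hk0
    have h : Φ x = J (x - α x • ξ) := by
      rw [hΦeq x hx, map_sub, map_smul, hJξ]
    rw [h]; exact ⟨h1, h2⟩
  -- Φ² = -Id + α ⊗ ξ on H
  have hΦ2 : ∀ x ∈ H, Φ (Φ x) = -x + α x • ξ := by
    intro x hx
    obtain ⟨h1, h2⟩ := hΦH x hx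
    rw [hΦker _ h1 h2, hΦeq x hx, map_sub, map_smul, hJ2, hJxP, smul_neg]
    abel
  -- the ω-compatibility identity
  have hω : ∀ x y : G, α ⁅x, J y⁆ = - α ⁅J x, y⁆ := by
    intro x y
    have h1 : α ⁅x, J y⁆ = g x (J (J y)) := by rw [← hωα, hωg]
    have h2 : α ⁅J x, y⁆ = g (J x) (J y) := by rw [← hωα, hωg]
    have h3 := hgJ x (J y)
    rw [h1, h2]; linarith
  -- key identity: N_Φ(x,y) = α[x,y]ξ + α(y)T(x) - α(x)T(y), T(u) = [xP,Ju] - J[xP,u]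
  have key : ∀ x ∈ H, ∀ y ∈ H, nijenhuis Φ x y =
      α ⁅x, y⁆ • ξ + α y • (⁅xP, J x⁆ - J ⁅xP, x⁆) - α x • (⁅xP, J y⁆ - J ⁅xP, y⁆) := by
    intro x hx y hy
    have hxy : ⁅x, y⁆ ∈ H := hHideal x y hy
    have hxJy : ⁅x, J y⁆ ∈ H := by
      rw [← lie_skew]; exact H.neg_mem (hHideal (J y) x hx)
    have hJxy : ⁅J x, y⁆ ∈ H := hHideal (J x) y hy
    have hPx : ⁅xP, x⁆ ∈ H := hHideal xP x hx
    have hPy : ⁅xP, y⁆ ∈ H := hHideal xP y hy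
    have hΦx : Φ x = J x - α x • xP := hΦeq x hx
    have hΦy : Φ y = J y - α y • xP := hΦeq y hy
    -- the four terms
    have A : Φ (Φ ⁅x, y⁆) = -⁅x, y⁆ + α ⁅x, y⁆ • ξ := hΦ2 _ hxy
    have B : ⁅Φ x, Φ y⁆ = ⁅J x, J y⁆ + α y • ⁅xP, J x⁆ - α x • ⁅xP, J y⁆ := by
      rw [hΦx, hΦy]
      rw [sub_lie, lie_sub, lie_sub, smul_lie, smul_lie, lie_smul, lie_smul, lie_self,
        ← lie_skew (J x) xP]
      module
    have C : Φ ⁅x, Φ y⁆ =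
        J ⁅x, J y⁆ - α ⁅x, J y⁆ • xP + α y • J ⁅xP, x⁆ - (α y * α x) • xP := by
      have h1 : ⁅x, Φ y⁆ = ⁅x, J y⁆ + α y • ⁅xP, x⁆ := by
        rw [hΦy, lie_sub, lie_smul, ← lie_skew x xP]
        module
      rw [h1, map_add, map_smul, hΦeq _ hxJy, hΦeq _ hPx, hxP]
      module
    have D : Φ ⁅Φ x, y⁆ =
        J ⁅J x, y⁆ - α ⁅J x, y⁆ • xP - α x • J ⁅xP, y⁆ + (α x * α y) • xP := by
      have h1 : ⁅Φ x, y⁆ = ⁅J x, y⁆ - α x • ⁅xP, y⁆ := by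
        rw [hΦx, sub_lie, smul_lie]
      rw [h1, map_sub, map_smul, hΦeq _ hJxy, hΦeq _ hPy, hxP]
      module
    have hN : ⁅J x, J y⁆ = ⁅x, y⁆ + J ⁅x, J y⁆ + J ⁅J x, y⁆ := by
      have h := hNJ x y
      unfold nijenhuis at h
      rw [hJ2] at h
      have h' : -⁅x, y⁆ + ⁅J x, J y⁆ - J ⁅x, J y⁆ - J ⁅J x, y⁆ = 0 := h
      linear_combination (norm := module) h'
    unfold nijenhuis
    rw [A, B, C, D, hN, hω x y]
    module
  constructor
  · -- Sasakian → ad(xP) commutes with Φ on Ker ᾱ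
    intro hS x hx hαx
    have h1 := key x hx ξ hξH
    have h2 := hS x hx ξ hξH
    rw [h2, hαξ, hαx, hJξ, lie_self, hbrPξ, hJξ] at h1
    have hT : ⁅xP, J x⁆ - J ⁅xP, x⁆ = 0 := by
      have := h1.symm
      rw [one_smul, zero_smul, sub_zero, add_eq_left] at this
      exact this
    have hPx : ⁅xP, x⁆ ∈ H := hHideal xP x hx
    have hαPx : α ⁅xP, x⁆ = 0 := by rw [hxP]; exact hαx
    rw [hΦker x hx hαx, hΦker _ hPx hαPx]
    exact sub_eq_zero.mp hT
  · -- ad(xP) commutes with Φ on Ker ᾱ → Sasakian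
    intro hC x hx y hy
    have hT : ∀ z ∈ H, ⁅xP, J z⁆ - J ⁅xP, z⁆ = α z • (-xP) := by
      intro z hz
      obtain ⟨hk, hk0⟩ := hKmem z hz
      have hPk : ⁅xP, z - α z • ξ⁆ ∈ H := hHideal xP _ hk
      have hαPk : α ⁅xP, z - α z • ξ⁆ = 0 := by rw [hxP]; exact hk0
      have hc := hC _ hk hk0
      rw [hΦker _ hk hk0, hΦker _ hPk hαPk] at hc
      -- hc : ⁅xP, J (z - α z • ξ)⁆ = J ⁅xP, z - α z • ξ⁆
      rw [map_sub, map_smul, hJξ, lie_sub, lie_smul, lie_self, smul_zero, sub_zero] at hc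
      rw [lie_sub, lie_smul, hbrPξ, map_sub, map_smul, hJξ] at hc
      -- hc : ⁅xP, J z⁆ = J ⁅xP, z⁆ - α z • xP
      rw [hc]
      module
    rw [key x hx y hy, hT x hx, hT y hy]
    module
end

section
/- Let 𝔤 be the 4-dimensional real Lie algebra with basis e₁, e₂, e₃, e₄ and nonzero brackets [e₁,e₂] = e₃, [e₄,e₁] = (1/2)e₁, [e₄,e₂] = (1/2)e₂, [e₄,e₃] = e₃ (the extension 𝔥₃(D) of the Heisenberg algebra by the derivation D = diag(1/2, 1/2, 1); this is the Lie algebra D_{4,1/2}). Let α = e³ ∈ 𝔤*, let ⟨·,·⟩ be the inner product making e₁,…,e₄ orthonormal, and let J ∈ End(𝔤) be given by J(e₁) = e₂, J(e₂) = −e₁, J(e₃) = −e₄, J(e₄) = e₃. Then: (i) the Kirillov form B_α(x,y) = α([x,y]) is nondegenerate, so (𝔤,α) is a Frobenius Lie algebra; (ii) J∘J = −Id; (iii) ⟨Jx,Jy⟩ = ⟨x,y⟩ for all x,y; (iv) B_α(x,y) = ⟨Jx,y⟩ for all x,y; (v) N_J = 0. Hence 𝔤 is a Frobenius–Kähler Lie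 algebra with exact symplectic form ω = −dα = B_α. -/
open LinearMap Module

section General

variable {R M L : Type*} [CommRing R] [AddCommGroup M] [Module R M]

theorem LinearMap.injective_of_comp_self_eq_neg_id {J : M →ₗ[R] M} (hJ : J ∘ₗ J = -id) :
    Function.Injective J :=
  Function.LeftInverse.injective (g := -J) fun x ↦ neg_eq_iff_eq_neg.mpr congr($hJ x)

theorem LinearMap.SeparatingLeft.comp_of_injective {M' N P : Type*} [AddCommGroup M']
    [Module R M'] [AddCommGroup N] [Module R N] [AddCommGroup P] [Module R P]
    {B : M →ₗ[R] N →ₗ[R] P} (hB : B.SeparatingLeft) {f : M' →ₗ[R] M}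
    (hf : Function.Injective f) : (B ∘ₗ f).SeparatingLeft :=
  fun x hx ↦ hf <| by rw [map_zero]; exact hB _ hx

theorem Module.Basis.toDual_separatingLeft {ι : Type*} [DecidableEq ι] (e : Basis ι R M) :
    e.toDual.SeparatingLeft :=
  separatingLeft_iff_ker_eq_bot.mpr e.toDual_ker

variable [LieRing L] [LieAlgebra R L]

def kirillovForm (α : L →ₗ[R] R) : L →ₗ[R] L →ₗ[R] R :=
  (LieModule.toEnd R L L : L →ₗ[R] Module.End R L).compr₂ α

@[simp]
theorem kirillovForm_apply (α : L →ₗ[R] R) (x y : L) : kirillovForm α x y = α ⁅x, y⁆ :=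
  rfl

end General

section Nijenhuis

variable {L : Type*} [LieRing L] [LieAlgebra ℝ L]

def nijenhuisBilin (F : L →ₗ[ℝ] L) : L →ₗ[ℝ] L →ₗ[ℝ] L :=
  let bracket : L →ₗ[ℝ] L →ₗ[ℝ] L := LieModule.toEnd ℝ L L
  bracket.compr₂ (F ∘ₗ F) + bracket.compl₁₂ F F - (bracket.compl₂ F).compr₂ F -
    (bracket ∘ₗ F).compr₂ F

@[simp]
theorem nijenhuisBilin_apply (F : L →ₗ[ℝ] L) (x y : L) :
    nijenhuisBilin F x y = nijenhuis F x y :=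
  rfl

end Nijenhuis

noncomputable def Module.Basis.d4ComplexStructure {R M : Type*} [CommRing R] [AddCommGroup M]
    [Module R M] (e : Basis (Fin 4) R M) : M →ₗ[R] M :=
  e.constr R ![e 1, -e 0, -e 3, e 2]

namespace Module.Basis

variable {R M : Type*} [CommRing R] [AddCommGroup M] [Module R M] (e : Basis (Fin 4) R M)

@[simp]
theorem d4ComplexStructure_basis (i : Fin 4) :
    e.d4ComplexStructure (e i) = ![e 1, -e 0, -e 3, e 2] i :=
  e.constr_basis R _ i

theorem d4ComplexStructure_comp_self :
    e.d4ComplexStructure ∘ₗ e.d4ComplexStructure = -LinearMap.id :=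
  e.ext fun i ↦ by fin_cases i <;> simp

theorem toDual_compl₁₂_d4ComplexStructure :
    e.toDual.compl₁₂ e.d4ComplexStructure e.d4ComplexStructure = e.toDual :=
  ext_basis e e fun i j ↦ by
    fin_cases i <;> fin_cases j <;> simp [toDual_apply]

end Module.Basis

structure IsD4HalfBasis {L : Type*} [LieRing L] [LieAlgebra ℝ L] (e : Basis (Fin 4) ℝ L) :
    Prop where
  lie_e0_e1 : ⁅e 0, e 1⁆ = e 2
  lie_e0_e2 : ⁅e 0, e 2⁆ = 0
  lie_e1_e2 : ⁅e 1, e 2⁆ = 0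
  lie_e3_e0 : ⁅e 3, e 0⁆ = (1/2 : ℝ) • e 0
  lie_e3_e1 : ⁅e 3, e 1⁆ = (1/2 : ℝ) • e 1
  lie_e3_e2 : ⁅e 3, e 2⁆ = e 2

namespace IsD4HalfBasis

variable {L : Type*} [LieRing L] [LieAlgebra ℝ L] {e : Basis (Fin 4) ℝ L}

theorem lie_basis (h : IsD4HalfBasis e) (i j : Fin 4) :
    ⁅e i, e j⁆ =
      ![![0, e 2, 0, -((1/2 : ℝ) • e 0)],
        ![-e 2, 0, 0, -((1/2 : ℝ) • e 1)],
        ![0, 0, 0, -e 2],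
        ![(1/2 : ℝ) • e 0, (1/2 : ℝ) • e 1, e 2, 0]] i j := by
  have h10 : ⁅e 1, e 0⁆ = -e 2 := by rw [← lie_skew, h.lie_e0_e1]
  have h20 : ⁅e 2, e 0⁆ = 0 := by rw [← lie_skew, h.lie_e0_e2, neg_zero]
  have h21 : ⁅e 2, e 1⁆ = 0 := by rw [← lie_skew, h.lie_e1_e2, neg_zero]
  have h03 : ⁅e 0, e 3⁆ = -((1/2 : ℝ) • e 0) := by rw [← lie_skew, h.lie_e3_e0]
  have h13 : ⁅e 1, e 3⁆ = -((1/2 : ℝ) • e 1) := by rw [← lie_skew, h.lie_e3_e1]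
  have h23 : ⁅e 2, e 3⁆ = -e 2 := by rw [← lie_skew, h.lie_e3_e2]
  fin_cases i <;> fin_cases j <;>
    simp [h.lie_e0_e1, h.lie_e0_e2, h.lie_e1_e2, h.lie_e3_e0, h.lie_e3_e1, h.lie_e3_e2,
      h10, h20, h21, h03, h13, h23]

theorem kirillovForm_coord_two (h : IsD4HalfBasis e) :
    kirillovForm (e.coord 2) = e.toDual ∘ₗ e.d4ComplexStructure :=
  ext_basis e e fun i j ↦ by
    fin_cases i <;> fin_cases j <;>
      simp [h.lie_basis, Basis.toDual_apply]

theorem nijenhuisBilin_d4ComplexStructure (h : IsD4HalfBasis e) :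
    nijenhuisBilin e.d4ComplexStructure = 0 :=
  ext_basis e e fun i j ↦ by
    fin_cases i <;> fin_cases j <;>
      simp [nijenhuis, h.lie_basis]

end IsD4HalfBasis

/-- The 4-dimensional Lie algebra `𝔥₃(D) = D_{4,1/2}` (basis `e₁,e₂,e₃,e₄`, nonzero
brackets `[e₁,e₂]=e₃`, `[e₄,e₁]=(1/2)e₁`, `[e₄,e₂]=(1/2)e₂`, `[e₄,e₃]=e₃`), with
`α = e³`, the inner product `⟨·,·⟩` making `e₁,…,e₄` orthonormal, and `J(e₁)=e₂`,
`J(e₂)=−e₁`, `J(e₃)=−e₄`, `J(e₄)=e₃`, is a Frobenius–Kähler Lie algebra: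
the Kirillov form `B_α` is nondegenerate, `J∘J=−Id`, `⟨Jx,Jy⟩=⟨x,y⟩`,
`B_α(x,y)=⟨Jx,y⟩`, and `N_J = 0`. -/
theorem D4_half_is_frobenius_kahler
    {L : Type*} [LieRing L] [LieAlgebra ℝ L]
    (e : Module.Basis (Fin 4) ℝ L)
    (h12 : ⁅e 0, e 1⁆ = e 2) (h13 : ⁅e 0, e 2⁆ = 0) (h23 : ⁅e 1, e 2⁆ = 0)
    (h41 : ⁅e 3, e 0⁆ = (1/2 : ℝ) • e 0)
    (h42 : ⁅e 3, e 1⁆ = (1/2 : ℝ) • e 1)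
    (h43 : ⁅e 3, e 2⁆ = e 2)
    (α : L →ₗ[ℝ] ℝ) (hα : ∀ i : Fin 4, α (e i) = if i = 2 then 1 else 0)
    (g : L →ₗ[ℝ] L →ₗ[ℝ] ℝ)
    (hg : ∀ i j : Fin 4, g (e i) (e j) = if i = j then 1 else 0)
    (J : L →ₗ[ℝ] L)
    (hJ0 : J (e 0) = e 1) (hJ1 : J (e 1) = -(e 0))
    (hJ2 : J (e 2) = -(e 3)) (hJ3 : J (e 3) = e 2) :
    -- (i) the Kirillov form B_α is nondegenerate, so (L, α) is Frobenius
    (∀ x : L, (∀ y : L, α ⁅x, y⁆ = 0) → x = 0) ∧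
    -- (ii)
    (∀ v : L, J (J v) = -v) ∧
    -- (iii)
    (∀ x y : L, g (J x) (J y) = g x y) ∧
    -- (iv) B_α(x,y) = ⟨Jx, y⟩
    (∀ x y : L, α ⁅x, y⁆ = g (J x) y) ∧
    -- (v)
    (∀ x y : L, nijenhuis J x y = 0) := by
  have he : IsD4HalfBasis e := ⟨h12, h13, h23, h41, h42, h43⟩
  obtain rfl : α = e.coord 2 := e.ext fun i ↦ by
    rw [hα, Basis.coord_apply, Basis.repr_self, Finsupp.single_apply]
  obtain rfl : g = e.toDual := ext_basis e e fun i j ↦ by rw [hg, Basis.toDual_apply]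
  obtain rfl : J = e.d4ComplexStructure := e.ext fun i ↦ by
    fin_cases i <;> simp [hJ0, hJ1, hJ2, hJ3]
  have hJJ := e.d4ComplexStructure_comp_self
  have hB := he.kirillovForm_coord_two
  refine ⟨?_, fun v ↦ congr($hJJ v), fun x y ↦ congr($(e.toDual_compl₁₂_d4ComplexStructure) x y),
    fun x y ↦ congr($hB x y), fun x y ↦ congr($(he.nijenhuisBilin_d4ComplexStructure) x y)⟩
  show (kirillovForm (e.coord 2)).SeparatingLeft
  rw [hB]
  exact e.toDual_separatingLeft.comp_of_injective (injective_of_comp_self_eq_neg_id hJJ)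
end
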